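/- arXiv:math/0604013 — 4 statements merged into one kernel-verified Lean document; each statement's English description precedes it below -/
import Mathlib

section
/- Let f = Σ_{ψ∈G*} a_ψ ψ and g = Σ_{ψ∈G*} b_ψ ψ be elements of the group algebra F[G*]. Then the Hermitian inner product of f and g satisfies ⟨f, g⟩_H = (1/n) Σ_{x∈G} f(x) · g(−q^{−1}x)^q, where −q^{−1} denotes the inverse of −q modulo the exponent m of G. -/
/-!
Expand both sides in characters. Since `q` is a power of the characteristic, `y ↦ y ^ q` is
additive on `K`, and `ψ (u • x) ^ q = ψ ((q * u) • x) = ψ (-x)` because `q * u ≡ -1` modulo the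
exponent of `G`. The orthogonality relation `∑ₓ ψ x * φ (-x) = n * [ψ = φ]` then collapses the
double sum over characters, and `n` is invertible in `K` as it is prime to `q`.
-/

open Finset

lemma zsmul_eq_zsmul_of_intCast_eq {G : Type*} [AddGroup G] {a b : ℤ}
    (h : (a : ZMod (AddMonoid.exponent G)) = b) (x : G) : a • x = b • x :=
  AddGroup.exponent_dvd_sub_iff_zsmul_eq_zsmul.mp
    ((ZMod.intCast_eq_intCast_iff_dvd_sub _ _ _).mp h.symm) x

lemma nsmul_zsmul_eq_neg_of_mul_neg_eq_one {G : Type*} [AddGroup G] {q : ℕ} {u : ℤ}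
    (hu : (u : ZMod (AddMonoid.exponent G)) * -(q : ZMod (AddMonoid.exponent G)) = 1)
    (x : G) : q • u • x = -x := by
  rw [← natCast_zsmul, smul_smul, zsmul_eq_zsmul_of_intCast_eq (b := -1), neg_one_zsmul]
  push_cast
  linear_combination -hu

namespace AddChar

variable {G R : Type*} [AddCommGroup G] [Fintype G] [CommSemiring R] [IsDomain R]

lemma sum_apply_mul_apply_neg [DecidableEq (AddChar G R)] (ψ φ : AddChar G R) :
    ∑ x, ψ x * φ (-x) = if ψ = φ then (Fintype.card G : R) else 0 := by
  simp_rw [← sub_apply, sum_eq_ite, sub_eq_zero]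

lemma sum_mul_sum_apply_neg [Fintype (AddChar G R)] (α β : AddChar G R → R) :
    ∑ x, (∑ ψ, α ψ * ψ x) * (∑ ψ, β ψ * ψ (-x)) = Fintype.card G * ∑ ψ, α ψ * β ψ := by
  classical
  calc ∑ x, (∑ ψ, α ψ * ψ x) * (∑ φ, β φ * φ (-x))
      = ∑ ψ, ∑ φ, α ψ * β φ * ∑ x, ψ x * φ (-x) := by
        simp_rw [sum_mul_sum, mul_sum]
        rw [sum_comm]
        refine sum_congr rfl fun ψ _ ↦ ?_
        rw [sum_comm]
        exact sum_congr rfl fun φ _ ↦ sum_congr rfl fun x _ ↦ by ring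
    _ = Fintype.card G * ∑ ψ, α ψ * β ψ := by
        simp_rw [sum_apply_mul_apply_neg, mul_ite, mul_zero, sum_ite_eq, mem_univ, if_true,
          mul_sum]
        exact sum_congr rfl fun ψ _ ↦ by ring

end AddChar

lemma FiniteField.exists_eq_ringChar_pow_of_card_eq_pow {F : Type*} [Field F] [Fintype F]
    {q k : ℕ} (h : Fintype.card F = q ^ k) (hk : k ≠ 0) : ∃ j ≠ 0, q = ringChar F ^ j := by
  obtain ⟨n, hp, hcard⟩ := FiniteField.card F (ringChar F)
  obtain ⟨j, -, rfl⟩ := (Nat.dvd_prime_pow hp).mp (hcard ▸ h ▸ dvd_pow_self q hk)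
  refine ⟨j, ?_, rfl⟩
  rintro rfl
  simpa [h] using Fintype.one_lt_card (α := F)

theorem stmt0_general
    {G : Type} [AddCommGroup G] [Fintype G]
    {F K : Type} [Field F] [Fintype F] [Field K] [Algebra F K]
    [Fintype (AddChar G K)]
    (q : ℕ)
    (hF : Fintype.card F = q ^ 2)
    (hn : Nat.Coprime (Fintype.card G) q)
    (u : ℤ)
    (hu : (u : ZMod (AddMonoid.exponent G)) * (-(q : ZMod (AddMonoid.exponent G))) = 1)
    (a b : AddChar G K → F) :
    algebraMap F K (∑ ψ : AddChar G K, a ψ * (b ψ) ^ q)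
      = (Fintype.card G : K)⁻¹ *
          ∑ x : G,
            (∑ ψ : AddChar G K, algebraMap F K (a ψ) * ψ x) *
              (∑ ψ : AddChar G K, algebraMap F K (b ψ) * ψ (u • x)) ^ q := by
  obtain ⟨j, hj, rfl⟩ := FiniteField.exists_eq_ringChar_pow_of_card_eq_pow hF two_ne_zero
  set p := ringChar F
  have hp : p.Prime := CharP.char_is_prime F p
  have : CharP K p := charP_of_injective_algebraMap (algebraMap F K).injective p
  have : ExpChar K p := ExpChar.prime hp
  have hG : (Fintype.card G : K) ≠ 0 := by
    rw [Ne, CharP.cast_eq_zero_iff K p, ← hp.coprime_iff_not_dvd]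
    exact ((Nat.coprime_pow_right_iff hj.bot_lt _ _).mp hn).symm
  have hfrob (x : G) : (∑ ψ : AddChar G K, algebraMap F K (b ψ) * ψ (u • x)) ^ p ^ j
      = ∑ ψ : AddChar G K, algebraMap F K (b ψ) ^ p ^ j * ψ (-x) := by
    rw [sum_pow_char_pow]
    simp_rw [mul_pow, ← AddChar.map_nsmul_eq_pow, nsmul_zsmul_eq_neg_of_mul_neg_eq_one hu]
  simp_rw [hfrob, AddChar.sum_mul_sum_apply_neg, map_sum, map_mul, map_pow,
    inv_mul_cancel_left₀ hG]

/-- Let `F = F_{q²}` and let `G` be a finite abelian group of order `n`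
coprime to the prime power `q`.  Let `K` be an extension of `F` containing all `m`-th roots
of unity (`m` the exponent of `G`), and identify elements of the group algebra `F[G*]` with
their coefficient functions `a : G* → F`, where `G*` is the group of additive characters of
`G` with values in `K`; such an element is viewed as the function
`x ↦ ∑ ψ, a ψ * ψ x` on `G`.  If `u` is the inverse of `-q` modulo `m`, then the Hermitian
inner product `⟨f,g⟩_H = ∑ ψ, a ψ * (b ψ)^q` satisfies
`⟨f,g⟩_H = (1/n) ∑_{x ∈ G} f(x) * g(u • x)^q`. -/
theorem stmt0
    {G : Type} [AddCommGroup G] [Fintype G]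
    {F K : Type} [Field F] [Fintype F] [Field K] [Algebra F K]
    [Fintype (AddChar G K)]
    (q : ℕ) (hq : IsPrimePow q)
    (hF : Fintype.card F = q ^ 2)
    (hn : Nat.Coprime (Fintype.card G) q)
    (hK : ∃ ζ : K, IsPrimitiveRoot ζ (AddMonoid.exponent G))
    (u : ℤ)
    (hu : (u : ZMod (AddMonoid.exponent G)) * (-(q : ZMod (AddMonoid.exponent G))) = 1)
    (a b : AddChar G K → F) :
    algebraMap F K (∑ ψ : AddChar G K, a ψ * (b ψ) ^ q)
      = (Fintype.card G : K)⁻¹ *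
          ∑ x : G,
            (∑ ψ : AddChar G K, algebraMap F K (a ψ) * ψ x) *
              (∑ ψ : AddChar G K, algebraMap F K (b ψ) * ψ (u • x)) ^ q :=
  stmt0_general q hF hn u hu a b
end

section
/- Let (Z, X_0, X_1) be a splitting of G over Z in which Z, X_0 and X_1 are unions of ⟨τ_{q²}⟩-orbits, and suppose τ_{−q}(Z) = Z. Then C_Z^{⊥_H} = C_0^Z ⊕ C_1^Z. Moreover, if −q splits the group code C_0 then C_0^{⊥_H} = C_0^Z, and if −q stabilizes C_0 then C_0^{⊥_H} = C_1^Z. -/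
open scoped BigOperators Classical
set_option linter.unusedSectionVars false
set_option linter.unusedVariables false
set_option maxHeartbeats 1000000

/-- The evaluation of the element of `F[G*]` with coefficient function `a` at `x ∈ G`,
namely `f(x) = ∑ ψ, a ψ * ψ x ∈ K`. -/
noncomputable def evalF {G : Type} [AddCommGroup G] {F K : Type} [Field F] [Field K]
    [Algebra F K] [Fintype (AddChar G K)] (a : AddChar G K → F) (x : G) : K :=
  ∑ ψ : AddChar G K, algebraMap F K (a ψ) * ψ x

/-- The code `I_X = {f ∈ F[G*] : f(x) = 0 for all x ∈ X}`. -/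
noncomputable def codeSet {G : Type} [AddCommGroup G] (F K : Type) [Field F] [Field K]
    [Algebra F K] [Fintype (AddChar G K)] (X : Set G) : Set (AddChar G K → F) :=
  {a | ∀ x ∈ X, evalF a x = 0}

/-- The Hermitian inner product `⟨f, g⟩_H = ∑ ψ, a ψ * (b ψ)^q` on `F[G*]`. -/
noncomputable def herm {G : Type} [AddCommGroup G] {F K : Type} [Field F] [Field K]
    [Algebra F K] [Fintype (AddChar G K)] (q : ℕ) (a b : AddChar G K → F) : F :=
  ∑ ψ : AddChar G K, a ψ * (b ψ) ^ q

/-- The Hermitian dual `C^{⊥_H}` of a code `C ⊆ F[G*]`. -/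
noncomputable def hermDual {G : Type} [AddCommGroup G] (F K : Type) [Field F] [Field K]
    [Algebra F K] [Fintype (AddChar G K)] (q : ℕ) (C : Set (AddChar G K → F)) :
    Set (AddChar G K → F) :=
  {a | ∀ b ∈ C, herm q a b = 0}

/-- The image `τ_s(X)` of `X ⊆ G` under the multiplication-by-`s` map `τ_s : x ↦ s • x`. -/
def tauImg {G : Type} [AddCommGroup G] (s : ℤ) (X : Set G) : Set G :=
  (fun x : G => s • x) '' X

section AuxLemmas
variable {G : Type} [AddCommGroup G] [Fintype G]
variable {F K : Type} [Field F] [Fintype F] [Field K] [Algebra F K] [Fintype (AddChar G K)]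

lemma aux_sep (hK : ∃ ζ : K, IsPrimitiveRoot ζ (AddMonoid.exponent G)) {x : G} (hx : x ≠ 0) :
    ∃ ψ : AddChar G K, ψ x ≠ 1 := by
  haveI : HasEnoughRootsOfUnity K (Monoid.exponent (Multiplicative G)) :=
    ⟨by rw [Monoid.exponent_multiplicative]; exact hK, inferInstance⟩
  obtain ⟨φ, hφ⟩ := CommGroup.exists_apply_ne_one_of_hasEnoughRootsOfUnity
      (G := Multiplicative G) (M := K) (a := Multiplicative.ofAdd x) (by simpa using hx)
  refine ⟨AddChar.toMonoidHomEquiv.symm ((Units.coeHom K).comp φ), ?_⟩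
  intro h
  apply hφ
  ext
  simpa using h

lemma aux_dual_orth (hK : ∃ ζ : K, IsPrimitiveRoot ζ (AddMonoid.exponent G)) (x : G) :
    ∑ ψ : AddChar G K, ψ x
      = if x = 0 then ((Fintype.card (AddChar G K) : K)) else 0 := by
  split_ifs with h
  · subst h; simp [Finset.card_univ]
  · obtain ⟨ψ₁, hψ₁⟩ := aux_sep hK h
    have h2 : ∑ ψ : AddChar G K, ψ x = ψ₁ x * ∑ ψ : AddChar G K, ψ x := by
      rw [Finset.mul_sum]
      refine Fintype.sum_equiv (Equiv.mulLeft ψ₁⁻¹) _ _ fun ψ => ?_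
      simp only [Equiv.coe_mulLeft, AddChar.mul_apply, AddChar.inv_apply, ← mul_assoc,
        ← AddChar.map_add_eq_mul, add_neg_cancel, AddChar.map_zero_eq_one, one_mul]
    have h3 : (ψ₁ x - 1) * ∑ ψ : AddChar G K, ψ x = 0 := by ring_nf; linear_combination h2.symm
    rcases mul_eq_zero.mp h3 with h4 | h4
    · exact absurd (sub_eq_zero.mp h4) hψ₁
    · exact h4

lemma aux_grp_orth (ψ χ : AddChar G K) :
    ∑ y : G, ψ (-y) * χ y = if ψ = χ then ((Fintype.card G : K)) else 0 := by
  have h1 : ∀ y : G, ψ (-y) * χ y = (ψ⁻¹ * χ) y := fun y => rfl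
  simp_rw [h1]
  rw [AddChar.sum_eq_ite]
  congr 1
  rw [eq_iff_iff, ← AddChar.one_eq_zero, inv_mul_eq_one]

lemma aux_card_le_roots (P : Polynomial K) (hP : P ≠ 0) (S : Finset K)
    (hS : ∀ u ∈ S, Polynomial.IsRoot P u) : S.card ≤ P.natDegree := by
  have h1 : S ⊆ P.roots.toFinset := fun u hu => Multiset.mem_toFinset.mpr
    (Polynomial.mem_roots'.mpr ⟨hP, hS u hu⟩)
  calc S.card ≤ P.roots.toFinset.card := Finset.card_le_card h1
    _ ≤ Multiset.card P.roots := Multiset.toFinset_card_le _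
    _ ≤ P.natDegree := Polynomial.card_roots' P

lemma aux_char (q : ℕ) (hq : IsPrimePow q) (hF : Fintype.card F = q ^ 2) :
    ∃ p k : ℕ, p.Prime ∧ 0 < k ∧ q = p ^ k ∧ CharP F p ∧ CharP K p := by
  obtain ⟨p', k, hp', hk, hpk⟩ := hq
  rw [← Nat.prime_iff] at hp'
  set pF := ringChar F with hpF
  have hpFp : pF.Prime := CharP.char_is_prime F pF
  obtain ⟨nn, -, hcard⟩ := FiniteField.card F pF
  have hqq : p' ^ (2 * k) = pF ^ (nn : ℕ) := by
    rw [← hcard, hF, ← hpk, mul_comm 2 k, pow_mul]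
  have hdvd : p' ∣ pF := by
    refine hp'.dvd_of_dvd_pow (n := (nn : ℕ)) ?_
    rw [← hqq]
    exact dvd_pow_self p' (by omega)
  have heq : p' = pF := (Nat.prime_dvd_prime_iff_eq hp' hpFp).mp hdvd
  haveI : CharP K pF := charP_of_injective_algebraMap (algebraMap F K).injective pF
  exact ⟨pF, k, hpFp, hk, by rw [← heq, hpk], ringChar.charP F, inferInstance⟩

lemma aux_frob (p k : ℕ) (hp : p.Prime) [CharP K p] (q : ℕ) (hq : q = p ^ k) :
    ∃ φ : K →+* K, ∀ x, φ x = x ^ q := by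
  haveI : Fact p.Prime := ⟨hp⟩
  exact ⟨iterateFrobenius K p k, fun x => by rw [iterateFrobenius_def, hq]⟩

-- the image of F in K is exactly the fixed points of x ↦ x^(q^2)

lemma aux_range (q : ℕ) (hq : 1 < q) (hF : Fintype.card F = q ^ 2)
    {u : K} (hu : u ^ q ^ 2 = u) : u ∈ Set.range (algebraMap F K) := by
  classical
  have halg : ∀ v : F, (algebraMap F K v) ^ q ^ 2 = algebraMap F K v := by
    intro v
    rw [← map_pow, ← hF, FiniteField.pow_card]
  set S : Finset K := Finset.univ.image (algebraMap F K) with hS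
  have hScard : S.card = q ^ 2 := by
    rw [hS, Finset.card_image_of_injective _ (algebraMap F K).injective,
      Finset.card_univ, hF]
  set P : Polynomial K := Polynomial.X ^ q ^ 2 - Polynomial.X with hPdef
  have hq2 : 1 < q ^ 2 := by nlinarith
  have hP : P ≠ 0 := by
    intro h
    have : P.coeff (q ^ 2) = 1 := by
      simp only [hPdef, Polynomial.coeff_sub, Polynomial.coeff_X_pow, if_pos rfl,
        Polynomial.coeff_X, if_neg (by omega : ¬ (1 = q ^ 2))]
      simp
    rw [h] at this
    simp at this
  have hroot : ∀ w : K, w ^ q ^ 2 = w → w ∈ P.roots.toFinset := by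
    intro w hw
    refine Multiset.mem_toFinset.mpr (Polynomial.mem_roots'.mpr ⟨hP, ?_⟩)
    simp [Polynomial.IsRoot, hPdef, sub_eq_zero, hw]
  have hsub : S ⊆ P.roots.toFinset := by
    intro w hw
    rw [hS, Finset.mem_image] at hw
    obtain ⟨v, -, rfl⟩ := hw
    exact hroot _ (halg v)
  have hcardle : P.roots.toFinset.card ≤ q ^ 2 := by
    refine le_trans (le_trans (Multiset.toFinset_card_le _) (Polynomial.card_roots' P)) ?_
    refine le_trans (Polynomial.natDegree_sub_le _ _) ?_
    simp [Polynomial.natDegree_X_pow]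
    omega
  have heq : S = P.roots.toFinset :=
    Finset.eq_of_subset_of_card_le hsub (by rw [hScard]; exact hcardle)
  have : u ∈ S := by rw [heq]; exact hroot u hu
  rw [hS, Finset.mem_image] at this
  obtain ⟨v, -, hv⟩ := this
  exact ⟨v, hv⟩

lemma aux_fix_iter (q : ℕ) (u : K) (hu : u ^ q ^ 2 = u) :
    ∀ j : ℕ, u ^ q ^ (2 * j) = u := by
  intro j
  induction j with
  | zero => simp
  | succ j ih =>
    have h1 : q ^ (2 * (j + 1)) = q ^ (2 * j) * q ^ 2 := by ring
    rw [h1, pow_mul, ih, hu]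

lemma aux_field (q p k : ℕ) (hp : p.Prime) (hk : 0 < k) (hqpk : q = p ^ k)
    [CharP K p] (hF : Fintype.card F = q ^ 2) (m : ℕ) [NeZero m]
    (ζ : K) (hζ : IsPrimitiveRoot ζ m) (hcop : Nat.Coprime (q ^ 2) m) :
    ∃ (r : ℕ) (S : Finset K), 0 < r ∧ ((q ^ (2 * r) : ℕ) : ZMod m) = 1 ∧
      (∀ u ∈ S, u ^ q ^ (2 * r) = u) ∧ q ^ (2 * (r - 1)) < S.card := by
  have hq1 : 1 < q := by
    rw [hqpk]
    exact Nat.one_lt_pow (by omega) hp.one_lt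
  have halg : ∀ v : F, (algebraMap F K v) ^ q ^ 2 = algebraMap F K v := by
    intro v
    rw [← map_pow, ← hF, FiniteField.pow_card]
  set u2 : (ZMod m)ˣ := ZMod.unitOfCoprime (q ^ 2) hcop with hu2
  set r : ℕ := orderOf u2 with hrdef
  have hr : 0 < r := orderOf_pos u2
  have hcast : ∀ t : ℕ, ((q ^ (2 * t) : ℕ) : ZMod m) = ((u2 : ZMod m)) ^ t := by
    intro t
    rw [hu2, ZMod.coe_unitOfCoprime, Nat.cast_pow, mul_comm 2 t, pow_mul, Nat.cast_pow]
    ring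
  have hu2r : ((q ^ (2 * r) : ℕ) : ZMod m) = 1 := by
    rw [hcast]
    have := pow_orderOf_eq_one u2
    calc (u2 : ZMod m) ^ r = ((u2 ^ r : (ZMod m)ˣ) : ZMod m) := by rw [Units.val_pow_eq_pow_val]
      _ = 1 := by rw [this]; rfl
  -- Frobenius to the power q^(2r)
  obtain ⟨φ', hφ'⟩ := aux_frob (K := K) p (k * (2 * r)) hp (q ^ (2 * r))
    (by rw [hqpk, ← pow_mul])
  have hQ1 : 1 < q ^ (2 * r) := Nat.one_lt_pow (by omega) hq1
  have hmdvd : m ∣ q ^ (2 * r) - 1 := by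
    have h1 : (q ^ (2 * r) : ℕ) ≡ 1 [MOD m] := (ZMod.natCast_eq_natCast_iff _ _ _).mp
      (by rw [hu2r, Nat.cast_one])
    exact (Nat.modEq_iff_dvd' (by omega)).mp h1.symm
  have hζfix : ζ ^ q ^ (2 * r) = ζ := by
    have h1 : ζ ^ (q ^ (2 * r) - 1) = 1 := (hζ.pow_eq_one_iff_dvd _).mpr hmdvd
    calc ζ ^ q ^ (2 * r) = ζ ^ ((q ^ (2 * r) - 1) + 1) := by congr 1; omega
      _ = ζ := by rw [pow_succ, h1, one_mul]
  -- fixed-point subalgebra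
  let Efix : Subalgebra F K :=
  { carrier := {u : K | φ' u = u}
    mul_mem' := fun {a b} ha hb => by
      simp only [Set.mem_setOf_eq, map_mul] at *
      rw [ha, hb]
    one_mem' := by simp [Set.mem_setOf_eq]
    add_mem' := fun {a b} ha hb => by
      simp only [Set.mem_setOf_eq, map_add] at *
      rw [ha, hb]
    zero_mem' := by simp [Set.mem_setOf_eq]
    algebraMap_mem' := fun v => by
      show φ' (algebraMap F K v) = algebraMap F K v
      rw [hφ']
      exact aux_fix_iter q _ (halg v) r }
  have hmemE : ∀ u : K, u ∈ Efix ↔ φ' u = u := fun u => Iff.rfl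
  -- Efix is finite
  set P : Polynomial K := Polynomial.X ^ q ^ (2 * r) - Polynomial.X with hPdef
  have hP : P ≠ 0 := by
    intro h
    have : P.coeff (q ^ (2 * r)) = 1 := by
      simp only [hPdef, Polynomial.coeff_sub, Polynomial.coeff_X_pow, if_pos rfl,
        Polynomial.coeff_X, if_neg (by omega : ¬ (1 = q ^ (2 * r)))]
      simp
    rw [h] at this
    simp at this
  have hEfin : (Efix : Set K).Finite := by
    refine Set.Finite.subset (P.roots.toFinset : Finset K).finite_toSet ?_
    intro u hu
    have hu2 : φ' u = u := hu
    rw [hφ'] at hu2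
    simp only [Finset.coe_sort_coe, Finset.mem_coe, Multiset.mem_toFinset]
    refine Polynomial.mem_roots'.mpr ⟨hP, ?_⟩
    simp [Polynomial.IsRoot, hPdef, sub_eq_zero, hu2]
  -- the adjoined field
  set AF : Subalgebra F K := Algebra.adjoin F ({ζ} : Set K) with hAF
  have hAFE : AF ≤ Efix := by
    rw [hAF]
    refine Algebra.adjoin_le ?_
    intro x hx
    rw [Set.mem_singleton_iff] at hx
    subst hx
    show φ' x = x
    rw [hφ']
    exact hζfix
  have hAFfin : (AF : Set K).Finite := Set.Finite.subset hEfin hAFE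
  haveI : Finite (AF : Set K) := hAFfin.to_subtype
  haveI : Finite AF := by exact ‹Finite (AF : Set K)›
  letI : Fintype AF := Fintype.ofFinite _
  letI : IsDomain AF := Function.Injective.isDomain AF.val.toRingHom Subtype.coe_injective
  letI : Field AF := Fintype.fieldOfDomain AF
  set t : ℕ := Module.finrank F AF with ht
  have hcardA : Fintype.card AF = q ^ (2 * t) := by
    rw [Module.card_eq_pow_finrank (K := F) (V := AF), hF, ← ht, ← pow_mul]
  -- ζ as an element of AF
  have hζmem : ζ ∈ AF := Algebra.subset_adjoin rfl
  set ζA : AF := ⟨ζ, hζmem⟩ with hζA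
  have hζApow : ζA ^ Fintype.card AF = ζA := FiniteField.pow_card ζA
  have hζpowK : ζ ^ q ^ (2 * t) = ζ := by
    have := congrArg (Subtype.val) hζApow
    rw [hcardA] at this
    simpa using this
  have hmdvd2 : m ∣ q ^ (2 * t) - 1 := by
    have hζ0 : ζ ≠ 0 := hζ.ne_zero (NeZero.ne m)
    have h1 : ζ ^ (q ^ (2 * t) - 1) * ζ = ζ := by
      rw [← pow_succ]
      calc ζ ^ (q ^ (2 * t) - 1 + 1) = ζ ^ q ^ (2 * t) := by
            congr 1
            have : 1 ≤ q ^ (2 * t) := Nat.one_le_pow _ _ (by omega)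
            omega
        _ = ζ := hζpowK
    have h2 : ζ ^ (q ^ (2 * t) - 1) = 1 :=
      mul_right_cancel₀ hζ0 (h1.trans (one_mul ζ).symm)
    exact hζ.dvd_of_pow_eq_one _ h2
  -- r divides t, so t ≥ r
  have ht1 : 0 < t := by
    by_contra h
    have ht0 : t = 0 := by omega
    have : Fintype.card AF = 1 := by rw [hcardA, ht0]; simp
    have h2 : (1 : AF) ≠ 0 := one_ne_zero
    have h3 := Fintype.one_lt_card_iff_nontrivial.mpr (⟨1, 0, h2⟩ : Nontrivial AF)
    omega
  have hu2t : u2 ^ t = 1 := by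
    ext
    rw [Units.val_pow_eq_pow_val, Units.val_one]
    have h1 : ((q ^ (2 * t) : ℕ) : ZMod m) = 1 := by
      have hQt : 1 ≤ q ^ (2 * t) := Nat.one_le_pow _ _ (by omega)
      have := (Nat.modEq_iff_dvd' hQt).mpr hmdvd2
      have h2 := (ZMod.natCast_eq_natCast_iff _ _ _).mpr this.symm
      rw [Nat.cast_one] at h2
      exact h2
    rw [← hcast t] at *
    exact h1
  have hrt : r ∣ t := orderOf_dvd_of_pow_eq_one hu2t
  have hrlet : r ≤ t := Nat.le_of_dvd ht1 hrt
  -- final finset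
  refine ⟨r, Finset.univ.image (fun u : AF => (u : K)), hr, hu2r, ?_, ?_⟩
  · intro u hu
    rw [Finset.mem_image] at hu
    obtain ⟨v, -, rfl⟩ := hu
    have hv : (v : K) ∈ Efix := hAFE v.2
    rw [hmemE, hφ'] at hv
    exact hv
  · rw [Finset.card_image_of_injective _ Subtype.coe_injective, Finset.card_univ, hcardA]
    have h1 : 2 * (r - 1) < 2 * t := by omega
    exact Nat.pow_lt_pow_right hq1 h1

lemma aux_evalF_frob (q : ℕ) (φ : K →+* K) (hφ : ∀ x : K, φ x = x ^ q)
    (halg : ∀ v : F, (algebraMap F K v) ^ q ^ 2 = algebraMap F K v)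
    (a : AddChar G K → F) (x : G) :
    evalF a ((q ^ 2) • x) = (evalF a x) ^ q ^ 2 := by
  have hφ2 : ∀ t : K, φ (φ t) = t ^ q ^ 2 := by
    intro t
    rw [hφ, hφ, ← pow_mul, ← pow_two]
  rw [evalF, evalF, ← hφ2, map_sum, map_sum]
  refine Finset.sum_congr rfl fun ψ _ => ?_
  rw [map_mul, map_mul, hφ2, hφ2, halg, AddChar.map_nsmul_eq_pow]

lemma aux_evalF_iter (q : ℕ) (φ : K →+* K) (hφ : ∀ x : K, φ x = x ^ q)
    (halg : ∀ v : F, (algebraMap F K v) ^ q ^ 2 = algebraMap F K v)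
    (a : AddChar G K → F) (j : ℕ) :
    ∀ x : G, evalF a ((q ^ (2 * j)) • x) = (evalF a x) ^ q ^ (2 * j) := by
  induction j with
  | zero => intro x; simp
  | succ j ih =>
    intro x
    have h1 : q ^ (2 * (j + 1)) = q ^ (2 * j) * q ^ 2 := by ring
    have h2 : q ^ (2 * (j + 1)) • x = q ^ (2 * j) • ((q ^ 2) • x) := by
      rw [← mul_smul, ← h1]
    rw [h2, ih, aux_evalF_frob q φ hφ halg, ← pow_mul, ← pow_add]
    congr 1
    rw [h1]
    ring

lemma aux_hermid (q : ℕ) (φ : K →+* K) (hφ : ∀ x : K, φ x = x ^ q)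
    (hbij : Function.Bijective (fun y : G => q • y))
    (a b : AddChar G K → F) :
    ((Fintype.card G : K)) * algebraMap F K (herm q a b)
      = ∑ y : G, evalF a ((-(q : ℤ)) • y) * (evalF b y) ^ q := by
  symm
  have hsmul : ∀ y : G, ((-(q : ℤ)) • y) = -(q • y) := by
    intro y
    rw [neg_smul, natCast_zsmul]
  have hbq : ∀ y : G, (evalF b y) ^ q = ∑ χ : AddChar G K, algebraMap F K (b χ ^ q) * χ (q • y) := by
    intro y
    rw [← hφ (evalF b y), evalF, map_sum]
    refine Finset.sum_congr rfl fun χ _ => ?_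
    rw [map_mul, hφ, hφ, ← map_pow, AddChar.map_nsmul_eq_pow]
  calc ∑ y : G, evalF a ((-(q : ℤ)) • y) * (evalF b y) ^ q
      = ∑ y : G, ∑ ψ : AddChar G K, ∑ χ : AddChar G K,
          (algebraMap F K (a ψ) * algebraMap F K (b χ ^ q)) * (ψ (-(q • y)) * χ (q • y)) := by
        refine Finset.sum_congr rfl fun y _ => ?_
        rw [hbq, evalF, Finset.sum_mul_sum]
        refine Finset.sum_congr rfl fun ψ _ => Finset.sum_congr rfl fun χ _ => ?_
        rw [hsmul]
        ring
    _ = ∑ ψ : AddChar G K, ∑ χ : AddChar G K,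
          (algebraMap F K (a ψ) * algebraMap F K (b χ ^ q)) * ∑ y : G, ψ (-y) * χ y := by
        rw [Finset.sum_comm]
        refine Finset.sum_congr rfl fun ψ _ => ?_
        rw [Finset.sum_comm]
        refine Finset.sum_congr rfl fun χ _ => ?_
        rw [← Finset.mul_sum]
        congr 1
        exact Fintype.sum_bijective (fun y : G => q • y) hbij
          (fun y => ψ (-(q • y)) * χ (q • y)) (fun v => ψ (-v) * χ v) (fun y => rfl)
    _ = ∑ ψ : AddChar G K, (algebraMap F K (a ψ) * algebraMap F K (b ψ ^ q)) * (Fintype.card G : K) := by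
        refine Finset.sum_congr rfl fun ψ _ => ?_
        have hh : ∀ χ : AddChar G K,
            (algebraMap F K (a ψ) * algebraMap F K (b χ ^ q)) * ∑ y : G, ψ (-y) * χ y
            = if ψ = χ then (algebraMap F K (a ψ) * algebraMap F K (b χ ^ q))
                * ((Fintype.card G : K)) else 0 := by
          intro χ
          rw [aux_grp_orth ψ χ]
          split_ifs <;> simp
        rw [Finset.sum_congr rfl fun χ _ => hh χ, Finset.sum_ite_eq]
        simp
    _ = ((Fintype.card G : K)) * algebraMap F K (herm q a b) := by
        rw [herm, map_sum, Finset.mul_sum]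
        refine Finset.sum_congr rfl fun ψ _ => ?_
        rw [map_mul]
        ring

lemma aux_delta (hK : ∃ ζ : K, IsPrimitiveRoot ζ (AddMonoid.exponent G))
    (q : ℕ) (φ : K →+* K) (hφ : ∀ x : K, φ x = x ^ q)
    (hNK : ((Fintype.card (AddChar G K) : K)) ≠ 0)
    (hrange : ∀ u : K, u ^ q ^ 2 = u → u ∈ Set.range (algebraMap F K))
    (r : ℕ) (hq2r_smul : ∀ x : G, (q ^ (2 * r)) • x = x)
    (z : G) (c : K) (hc : c ^ q ^ (2 * r) = c) :
    ∃ b : AddChar G K → F, ∀ y : G,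
      evalF b y = ∑ j ∈ Finset.range r,
        (if y = (q ^ (2 * j)) • z then c ^ q ^ (2 * j) else 0) := by
  set N : K := ((Fintype.card (AddChar G K) : K)) with hN
  have hφ2 : ∀ t : K, φ (φ t) = t ^ q ^ 2 := by
    intro t
    rw [hφ, hφ, ← pow_mul, ← pow_two]
  set B : AddChar G K → K :=
    fun ψ => N⁻¹ * ∑ j ∈ Finset.range r, (c * ψ (-z)) ^ q ^ (2 * j) with hB
  have hpow : ∀ ψ : AddChar G K, (c * ψ (-z)) ^ q ^ (2 * r) = c * ψ (-z) := by
    intro ψ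
    rw [mul_pow, hc, ← AddChar.map_nsmul_eq_pow, hq2r_smul]
  have hBfix : ∀ ψ : AddChar G K, (B ψ) ^ q ^ 2 = B ψ := by
    intro ψ
    set g : ℕ → K := fun j => (c * ψ (-z)) ^ q ^ (2 * j) with hg
    have hg0 : g r = g 0 := by
      simp only [hg]
      rw [hpow]
      norm_num
    have hstep : ∀ j, φ (φ (g j)) = g (j + 1) := by
      intro j
      simp only [hg]
      rw [hφ2, ← pow_mul, ← pow_add]
      congr 1
    have hshift : ∑ j ∈ Finset.range r, g (j + 1) = ∑ j ∈ Finset.range r, g j := by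
      have h1 := Finset.sum_range_succ' g r
      have h2 := Finset.sum_range_succ g r
      rw [h1, hg0] at h2
      exact add_right_cancel h2
    calc (B ψ) ^ q ^ 2 = φ (φ (B ψ)) := (hφ2 _).symm
      _ = N⁻¹ * ∑ j ∈ Finset.range r, g (j + 1) := by
          rw [hB]
          simp only [map_mul, map_sum, map_inv₀, hN, map_natCast]
          congr 1
          exact Finset.sum_congr rfl fun j _ => hstep j
      _ = B ψ := by rw [hshift]
  have hBr : ∀ ψ : AddChar G K, ∃ v : F, algebraMap F K v = B ψ := by
    intro ψ
    exact hrange _ (hBfix ψ)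
  choose b hb using hBr
  refine ⟨b, fun y => ?_⟩
  have heval : evalF b y = ∑ ψ : AddChar G K, B ψ * ψ y := by
    rw [evalF]
    exact Finset.sum_congr rfl fun ψ _ => by rw [hb]
  rw [heval]
  calc ∑ ψ : AddChar G K, B ψ * ψ y
      = ∑ ψ : AddChar G K, ∑ j ∈ Finset.range r,
          N⁻¹ * (c ^ q ^ (2 * j) * ψ (y - (q ^ (2 * j)) • z)) := by
        refine Finset.sum_congr rfl fun ψ _ => ?_
        simp only [hB]
        rw [mul_assoc, Finset.sum_mul, Finset.mul_sum]
        refine Finset.sum_congr rfl fun j _ => ?_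
        congr 1
        rw [mul_pow, mul_assoc]
        congr 1
        rw [← AddChar.map_nsmul_eq_pow, smul_neg, ← neg_add_eq_sub,
          AddChar.map_add_eq_mul]
    _ = ∑ j ∈ Finset.range r,
          N⁻¹ * (c ^ q ^ (2 * j) * ∑ ψ : AddChar G K, ψ (y - (q ^ (2 * j)) • z)) := by
        rw [Finset.sum_comm]
        refine Finset.sum_congr rfl fun j _ => ?_
        simp only [Finset.mul_sum]
    _ = ∑ j ∈ Finset.range r, (if y = (q ^ (2 * j)) • z then c ^ q ^ (2 * j) else 0) := by
        refine Finset.sum_congr rfl fun j _ => ?_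
        rw [aux_dual_orth hK]
        by_cases h : y = (q ^ (2 * j)) • z
        · rw [if_pos (by rw [h, sub_self]), if_pos h, ← hN]
          field_simp
        · rw [if_neg (fun hh => h (sub_eq_zero.mp hh)), if_neg h]
          ring

lemma aux_kernel (hK : ∃ ζ : K, IsPrimitiveRoot ζ (AddMonoid.exponent G))
    (q : ℕ) (hq1 : 1 < q)
    (φ : K →+* K) (hφ : ∀ x : K, φ x = x ^ q)
    (halg : ∀ v : F, (algebraMap F K v) ^ q ^ 2 = algebraMap F K v)
    (hNK : ((Fintype.card (AddChar G K) : K)) ≠ 0)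
    (hnK : ((Fintype.card G : K)) ≠ 0)
    (hrange : ∀ u : K, u ^ q ^ 2 = u → u ∈ Set.range (algebraMap F K))
    (hbij : Function.Bijective (fun y : G => q • y))
    (r : ℕ) (hr : 0 < r) (hq2r_smul : ∀ x : G, (q ^ (2 * r)) • x = x)
    (S : Finset K) (hSpow : ∀ u ∈ S, u ^ q ^ (2 * r) = u)
    (hScard : q ^ (2 * (r - 1)) < S.card)
    (W X' : Set G) (hW : ∀ x ∈ W, (q ^ 2) • x ∈ W) (hWX : ∀ y ∈ W, y ∉ X')
    (a : AddChar G K → F) (hvan : ∀ b ∈ codeSet F K X', herm q a b = 0)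
    (z : G) (hz : z ∈ W) : evalF a ((-(q : ℤ)) • z) = 0 := by
  by_contra hfw
  set w : G := (-(q : ℤ)) • z with hw
  -- the orbit of z stays in W
  have horbit : ∀ j : ℕ, (q ^ (2 * j)) • z ∈ W := by
    intro j
    induction j with
    | zero => simpa using hz
    | succ j ih =>
      have h2 : q ^ (2 * (j + 1)) • z = (q ^ 2) • ((q ^ (2 * j)) • z) := by
        rw [← mul_smul]
        congr 1
        ring
      rw [h2]
      exact hW _ ih
  -- the polynomial T
  set T : Polynomial K := ∑ j ∈ Finset.range r, Polynomial.X ^ q ^ (2 * j) with hT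
  have hTdeg : T.natDegree ≤ q ^ (2 * (r - 1)) := by
    refine Polynomial.natDegree_sum_le_of_forall_le _ _ fun j hj => ?_
    refine le_trans (Polynomial.natDegree_X_pow_le _) ?_
    exact Nat.pow_le_pow_right (by omega) (by have := Finset.mem_range.mp hj; omega)
  have hT0 : T ≠ 0 := by
    intro h0
    have hc1 : T.coeff (q ^ (2 * (r - 1))) = 1 := by
      rw [hT, Polynomial.finset_sum_coeff]
      have hterm : ∀ j ∈ Finset.range r,
          (Polynomial.X ^ q ^ (2 * j) : Polynomial K).coeff (q ^ (2 * (r - 1)))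
          = if j = r - 1 then 1 else 0 := by
        intro j hj
        rw [Polynomial.coeff_X_pow]
        congr 1
        rw [eq_iff_iff]
        constructor
        · intro h
          have := Nat.pow_right_injective hq1 h.symm
          omega
        · intro h
          rw [h]
      rw [Finset.sum_congr rfl hterm, Finset.sum_ite_eq' (Finset.range r) (r - 1)]
      rw [if_pos (Finset.mem_range.mpr (by omega))]
    rw [h0] at hc1
    simp at hc1
  -- every element f(w) * c^q with c ∈ S is a root of T
  have hroot : ∀ c ∈ S, T.IsRoot (evalF a w * c ^ q) := by
    intro c hcS
    obtain ⟨b, hbev⟩ := aux_delta hK q φ hφ hNK hrange r hq2r_smul z c (hSpow c hcS)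
    have hbcode : b ∈ codeSet F K X' := by
      intro y hy
      rw [hbev]
      refine Finset.sum_eq_zero fun j _ => ?_
      rw [if_neg]
      intro heq
      exact (hWX _ (horbit j)) (heq ▸ hy)
    have hherm := hvan b hbcode
    have hid := aux_hermid q φ hφ hbij a b
    rw [hherm, map_zero, mul_zero] at hid
    -- compute the sum
    have hbq : ∀ y : G, (evalF b y) ^ q
        = ∑ j ∈ Finset.range r, (if y = (q ^ (2 * j)) • z then (c ^ q ^ (2 * j)) ^ q else 0) := by
      intro y
      rw [← hφ, hbev, map_sum]
      refine Finset.sum_congr rfl fun j _ => ?_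
      rw [apply_ite φ, map_zero, hφ]
    have hsum : (0 : K) = ∑ j ∈ Finset.range r, (evalF a w * c ^ q) ^ q ^ (2 * j) := by
      rw [hid]
      calc ∑ y : G, evalF a ((-(q : ℤ)) • y) * (evalF b y) ^ q
          = ∑ y : G, ∑ j ∈ Finset.range r,
              (if y = (q ^ (2 * j)) • z then evalF a ((-(q : ℤ)) • y) * (c ^ q ^ (2 * j)) ^ q
               else 0) := by
            refine Finset.sum_congr rfl fun y _ => ?_
            rw [hbq, Finset.mul_sum]
            refine Finset.sum_congr rfl fun j _ => ?_
            rw [mul_ite, mul_zero]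
        _ = ∑ j ∈ Finset.range r, ∑ y : G,
              (if y = (q ^ (2 * j)) • z then evalF a ((-(q : ℤ)) • y) * (c ^ q ^ (2 * j)) ^ q
               else 0) := Finset.sum_comm
        _ = ∑ j ∈ Finset.range r, (evalF a w * c ^ q) ^ q ^ (2 * j) := by
            refine Finset.sum_congr rfl fun j _ => ?_
            rw [Finset.sum_ite_eq' Finset.univ ((q ^ (2 * j)) • z)]
            rw [if_pos (Finset.mem_univ _)]
            have hcomm : (-(q : ℤ)) • ((q ^ (2 * j)) • z) = (q ^ (2 * j)) • w := by
              rw [hw, smul_comm]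
            rw [hcomm, aux_evalF_iter q φ hφ halg a j w, mul_pow]
            congr 1
            rw [← pow_mul, ← pow_mul, mul_comm (q ^ (2 * j)) q]
    -- hsum says T.eval (evalF a w * c^q) = 0
    have : T.eval (evalF a w * c ^ q) = 0 := by
      rw [hT, Polynomial.eval_finset_sum]
      simp only [Polynomial.eval_pow, Polynomial.eval_X]
      exact hsum.symm
    exact this
  -- now count roots
  have hinj : Function.Injective (fun u : K => evalF a w * u ^ q) := by
    intro u v huv
    simp only at huv
    have h1 : u ^ q = v ^ q := mul_left_cancel₀ hfw huv
    have h2 : φ u = φ v := by rw [hφ, hφ, h1]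
    exact φ.injective h2
  have hcard : (S.image (fun u : K => evalF a w * u ^ q)).card = S.card :=
    Finset.card_image_of_injective S hinj
  have hle : (S.image (fun u : K => evalF a w * u ^ q)).card ≤ T.natDegree := by
    refine aux_card_le_roots T hT0 _ fun u hu => ?_
    obtain ⟨c, hcS, rfl⟩ := Finset.mem_image.mp hu
    exact hroot c hcS
  omega

end AuxLemmas

/-- Let `(Z, X₀, X₁)` be a splitting of `G` over `Z` (a partition of `G`
admitting an invertible `s` mod the exponent with `τ_s(X₀) = X₁` and `τ_s(X₁) = X₀`) in
which `Z, X₀, X₁` are unions of `⟨τ_{q²}⟩`-orbits, and suppose `τ_{-q}(Z) = Z`.  Writing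
`C_Z = I_{X₀∪X₁}`, `C₀ = I_{X₀}`, `C₀^Z = I_{Z∪X₀}`, `C₁^Z = I_{Z∪X₁}` for the codes over
`F = F_{q²}`, we have `C_Z^{⊥_H} = C₀^Z ⊕ C₁^Z` (a direct sum).  Moreover, if `-q` splits
the group code `C₀` then `C₀^{⊥_H} = C₀^Z`, and if `-q` stabilizes `C₀` then
`C₀^{⊥_H} = C₁^Z`. -/
theorem stmt3
    {G : Type} [AddCommGroup G] [Fintype G]
    {F K : Type} [Field F] [Fintype F] [Field K] [Algebra F K]
    [Fintype (AddChar G K)]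
    (q : ℕ) (hq : IsPrimePow q)
    (hF : Fintype.card F = q ^ 2)
    (hn : Nat.Coprime (Fintype.card G) q)
    (hK : ∃ ζ : K, IsPrimitiveRoot ζ (AddMonoid.exponent G))
    (Z X₀ X₁ : Set G)
    (hcover : Z ∪ X₀ ∪ X₁ = Set.univ)
    (hZX₀ : Disjoint Z X₀) (hZX₁ : Disjoint Z X₁) (hX₀X₁ : Disjoint X₀ X₁)
    (hZorb : ∀ x ∈ Z, ((q : ℤ) ^ 2) • x ∈ Z)
    (hX₀orb : ∀ x ∈ X₀, ((q : ℤ) ^ 2) • x ∈ X₀)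
    (hX₁orb : ∀ x ∈ X₁, ((q : ℤ) ^ 2) • x ∈ X₁)
    (hsplit : ∃ s : ℤ, IsUnit (s : ZMod (AddMonoid.exponent G)) ∧
      tauImg s X₀ = X₁ ∧ tauImg s X₁ = X₀)
    (hZfix : tauImg (-(q : ℤ)) Z = Z) :
    (hermDual F K q (codeSet F K (X₀ ∪ X₁))
        = {c | ∃ a ∈ codeSet F K (Z ∪ X₀), ∃ b ∈ codeSet F K (Z ∪ X₁), c = a + b} ∧
      codeSet F K (Z ∪ X₀) ∩ codeSet F K (Z ∪ X₁) = {0}) ∧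
    (tauImg (-(q : ℤ)) X₀ = X₁ ∧ tauImg (-(q : ℤ)) X₁ = X₀ →
      hermDual F K q (codeSet F K X₀) = codeSet F K (Z ∪ X₀)) ∧
    (tauImg (-(q : ℤ)) X₀ = X₀ ∧ tauImg (-(q : ℤ)) X₁ = X₁ →
      hermDual F K q (codeSet F K X₀) = codeSet F K (Z ∪ X₁)) := by
  classical
  obtain ⟨p, k, hp, hk, hqpk, hcharF, hcharK⟩ := aux_char (K := K) q hq hF
  haveI := hcharF
  haveI := hcharK
  haveI : Fact p.Prime := ⟨hp⟩
  have hq1 : 1 < q := hq.two_le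
  obtain ⟨φ, hφ⟩ := aux_frob (K := K) p k hp q hqpk
  have halg : ∀ v : F, (algebraMap F K v) ^ q ^ 2 = algebraMap F K v := by
    intro v
    rw [← map_pow, ← hF, FiniteField.pow_card]
  have hrange : ∀ u : K, u ^ q ^ 2 = u → u ∈ Set.range (algebraMap F K) :=
    fun u hu => aux_range q hq1 hF hu
  have hpq : p ∣ q := by
    rw [hqpk]
    exact dvd_pow_self p (by omega)
  have hpn : ¬ p ∣ Fintype.card G := by
    intro h
    have h2 : p ∣ Nat.gcd (Fintype.card G) q := Nat.dvd_gcd h hpq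
    rw [Nat.Coprime.gcd_eq_one hn] at h2
    have h3 := Nat.dvd_one.mp h2
    have := hp.one_lt
    omega
  have hnK : ((Fintype.card G : K)) ≠ 0 := fun h =>
    hpn ((CharP.cast_eq_zero_iff K p _).mp h)
  have hm0 : AddMonoid.exponent G ≠ 0 := AddMonoid.exponent_ne_zero_of_finite
  haveI : NeZero (AddMonoid.exponent G) := ⟨hm0⟩
  have hmdvd : AddMonoid.exponent G ∣ Fintype.card G := AddGroup.exponent_dvd_card
  have hNK : ((Fintype.card (AddChar G K) : K)) ≠ 0 := by
    intro h0
    have hpN : p ∣ Fintype.card (AddChar G K) := (CharP.cast_eq_zero_iff K p _).mp h0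
    obtain ⟨ψ, hψ⟩ := exists_prime_orderOf_dvd_card p hpN
    have hψm : ψ ^ AddMonoid.exponent G = 1 := by
      ext x
      rw [AddChar.pow_apply, ← AddChar.map_nsmul_eq_pow,
        AddMonoid.exponent_nsmul_eq_zero, AddChar.map_zero_eq_one, AddChar.one_apply]
    have hdvd := orderOf_dvd_of_pow_eq_one hψm
    rw [hψ] at hdvd
    exact hpn (hdvd.trans hmdvd)
  have hcop : Nat.Coprime (q ^ 2) (AddMonoid.exponent G) := by
    have h1 : Nat.Coprime q (AddMonoid.exponent G) :=
      Nat.Coprime.coprime_dvd_right hmdvd hn.symm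
    exact h1.pow_left 2
  obtain ⟨ζ, hζ⟩ := hK
  obtain ⟨r, S, hr, hu2r, hSpow, hScard⟩ :=
    aux_field (F := F) q p k hp hk hqpk hF (AddMonoid.exponent G) ζ hζ hcop
  have hq2r_smul : ∀ x : G, (q ^ (2 * r)) • x = x := by
    intro x
    have h1 : (q ^ (2 * r)) ≡ 1 [MOD AddMonoid.exponent G] :=
      (ZMod.natCast_eq_natCast_iff _ _ _).mp (by rw [hu2r, Nat.cast_one])
    have hQ1 : 1 ≤ q ^ (2 * r) := Nat.one_le_pow _ _ (by omega)
    have h2 : AddMonoid.exponent G ∣ q ^ (2 * r) - 1 :=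
      (Nat.modEq_iff_dvd' hQ1).mp h1.symm
    obtain ⟨c, hc⟩ := h2
    have h3 : q ^ (2 * r) = AddMonoid.exponent G * c + 1 := by omega
    rw [h3, add_smul, one_smul, mul_smul, AddMonoid.exponent_nsmul_eq_zero, zero_add]
  have hsmul_inj : ∀ t : ℕ, Nat.Coprime (Fintype.card G) t →
      Function.Injective (fun y : G => t • y) := by
    intro t ht y1 y2 h
    simp only at h
    have h1 : t • (y1 - y2) = 0 := by rw [smul_sub, h, sub_self]
    have h2 : addOrderOf (y1 - y2) ∣ t := addOrderOf_dvd_of_nsmul_eq_zero h1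
    have h3 : addOrderOf (y1 - y2) ∣ Fintype.card G := addOrderOf_dvd_card
    have h4 : addOrderOf (y1 - y2) ∣ Nat.gcd (Fintype.card G) t := Nat.dvd_gcd h3 h2
    rw [Nat.Coprime.gcd_eq_one ht] at h4
    have h5 : y1 - y2 = 0 := AddMonoid.addOrderOf_eq_one_iff.mp (Nat.dvd_one.mp h4)
    rw [sub_eq_zero] at h5
    exact h5
  have hbij : Function.Bijective (fun y : G => q • y) :=
    (Finite.injective_iff_bijective).mp (hsmul_inj q hn)
  have hbij2 : Function.Bijective (fun y : G => (q ^ 2) • y) :=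
    (Finite.injective_iff_bijective).mp (hsmul_inj (q ^ 2) (hn.pow_right 2))
  -- ℕ-versions of the orbit hypotheses
  have hcastsmul : ∀ x : G, ((q : ℤ) ^ 2) • x = (q ^ 2) • x := by
    intro x
    rw [show ((q : ℤ) ^ 2) = ((q ^ 2 : ℕ) : ℤ) by push_cast; ring, natCast_zsmul]
  have hZorbN : ∀ x ∈ Z, (q ^ 2) • x ∈ Z := fun x hx => by
    have := hZorb x hx
    rwa [hcastsmul] at this
  have hX₀orbN : ∀ x ∈ X₀, (q ^ 2) • x ∈ X₀ := fun x hx => by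
    have := hX₀orb x hx
    rwa [hcastsmul] at this
  have hX₁orbN : ∀ x ∈ X₁, (q ^ 2) • x ∈ X₁ := fun x hx => by
    have := hX₁orb x hx
    rwa [hcastsmul] at this
  -- membership of every element in one of the three parts
  have hmem3 : ∀ y : G, y ∈ Z ∨ y ∈ X₀ ∨ y ∈ X₁ := by
    intro y
    have h1 : y ∈ Z ∪ X₀ ∪ X₁ := by rw [hcover]; exact Set.mem_univ y
    rcases h1 with (h | h) | h
    · exact Or.inl h
    · exact Or.inr (Or.inl h)
    · exact Or.inr (Or.inr h)
  have hZX₀' : ∀ y ∈ Z, y ∉ X₀ := fun y hy hy2 => Set.disjoint_left.mp hZX₀ hy hy2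
  have hZX₁' : ∀ y ∈ Z, y ∉ X₁ := fun y hy hy2 => Set.disjoint_left.mp hZX₁ hy hy2
  have hX₀X₁' : ∀ y ∈ X₀, y ∉ X₁ := fun y hy hy2 => Set.disjoint_left.mp hX₀X₁ hy hy2
  have hZneg : ∀ y ∈ Z, ((-(q : ℤ)) • y) ∈ Z := by
    intro y hy
    rw [← hZfix]
    exact ⟨y, hy, rfl⟩
  have hZrep : ∀ w ∈ Z, ∃ z ∈ Z, ((-(q : ℤ)) • z) = w := by
    intro w hw
    rw [← hZfix] at hw
    obtain ⟨z, hz, hzw⟩ := hw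
    exact ⟨z, hz, hzw⟩
  -- the forward lemma
  have hforward : ∀ (Y X' : Set G), (∀ y : G, y ∉ X' → ((-(q : ℤ)) • y) ∈ Y) →
      ∀ a ∈ codeSet F K Y, ∀ b ∈ codeSet F K X', herm q a b = 0 := by
    intro Y X' hYX a ha b hb
    have hid := aux_hermid q φ hφ hbij a b
    have hzero : ∑ y : G, evalF a ((-(q : ℤ)) • y) * (evalF b y) ^ q = 0 := by
      refine Finset.sum_eq_zero fun y _ => ?_
      by_cases hy : y ∈ X'
      · rw [hb y hy, zero_pow (by omega : q ≠ 0), mul_zero]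
      · rw [ha _ (hYX y hy), zero_mul]
    rw [hzero] at hid
    have h2 : algebraMap F K (herm q a b) = 0 := by
      rcases mul_eq_zero.mp hid with h | h
      · exact absurd h hnK
      · exact h
    exact (map_eq_zero_iff _ (algebraMap F K).injective).mp h2
  -- the backward (kernel) lemma, specialized
  have hkernel : ∀ (W X' : Set G), (∀ x ∈ W, (q ^ 2) • x ∈ W) → (∀ y ∈ W, y ∉ X') →
      ∀ a, (∀ b ∈ codeSet F K X', herm q a b = 0) →
      ∀ w, (∃ z ∈ W, ((-(q : ℤ)) • z) = w) → evalF a w = 0 := by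
    intro W X' hW hWX a hvan w hrep
    obtain ⟨z, hz, rfl⟩ := hrep
    exact aux_kernel ⟨ζ, hζ⟩ q hq1 φ hφ halg hNK hnK hrange hbij r hr hq2r_smul
      S hSpow hScard W X' hW hWX a hvan z hz
  -- evaluation of a difference
  have hsub : ∀ (a b : AddChar G K → F) (y : G),
      evalF (a - b) y = evalF a y - evalF b y := by
    intro a b y
    rw [evalF, evalF, evalF, ← Finset.sum_sub_distrib]
    refine Finset.sum_congr rfl fun ψ _ => ?_
    rw [Pi.sub_apply, map_sub, sub_mul]
  -- Fourier inversion: a code word vanishing everywhere is zero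
  have hzero_code : ∀ a : AddChar G K → F, (∀ y : G, evalF a y = 0) → a = 0 := by
    intro a hall
    funext ψ
    have h1 : ∑ y : G, ψ (-y) * evalF a y
        = (Fintype.card G : K) * algebraMap F K (a ψ) := by
      calc ∑ y : G, ψ (-y) * evalF a y
          = ∑ y : G, ∑ χ : AddChar G K, algebraMap F K (a χ) * (ψ (-y) * χ y) := by
            refine Finset.sum_congr rfl fun y _ => ?_
            rw [evalF, Finset.mul_sum]
            exact Finset.sum_congr rfl fun χ _ => by ring
        _ = ∑ χ : AddChar G K, algebraMap F K (a χ) * ∑ y : G, ψ (-y) * χ y := by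
            rw [Finset.sum_comm]
            exact Finset.sum_congr rfl fun χ _ => by rw [Finset.mul_sum]
        _ = (Fintype.card G : K) * algebraMap F K (a ψ) := by
            have hh : ∀ χ : AddChar G K, algebraMap F K (a χ) * ∑ y : G, ψ (-y) * χ y
                = if ψ = χ then algebraMap F K (a χ) * (Fintype.card G : K) else 0 := by
              intro χ
              rw [aux_grp_orth ψ χ]
              split_ifs <;> simp
            rw [Finset.sum_congr rfl fun χ _ => hh χ, Finset.sum_ite_eq,
              if_pos (Finset.mem_univ _)]
            ring
    have h2 : (0 : K) = (Fintype.card G : K) * algebraMap F K (a ψ) := by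
      rw [← h1]
      refine (Finset.sum_eq_zero fun y _ => ?_).symm
      rw [hall y, mul_zero]
    have h3 : algebraMap F K (a ψ) = 0 := by
      rcases mul_eq_zero.mp h2.symm with h | h
      · exact absurd h hnK
      · exact h
    exact (map_eq_zero_iff _ (algebraMap F K).injective).mp h3
  refine ⟨⟨?_, ?_⟩, ?_, ?_⟩
  -- Part 1a : hermDual C_Z = C₀^Z + C₁^Z
  · ext c
    constructor
    · intro hc
      have hcZ : ∀ w ∈ Z, evalF c w = 0 := by
        intro w hw
        refine hkernel Z (X₀ ∪ X₁) hZorbN ?_ c hc w (hZrep w hw)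
        intro y hy hy2
        rcases hy2 with h | h
        · exact hZX₀' y hy h
        · exact hZX₁' y hy h
      -- construct the decomposition
      set X₀f : Finset G := (Set.toFinite X₀).toFinset with hX₀f
      have hmemf : ∀ y : G, y ∈ X₀f ↔ y ∈ X₀ := fun y => Set.Finite.mem_toFinset _
      set B1 : AddChar G K → K := fun χ =>
        ((Fintype.card (AddChar G K) : K))⁻¹ * ∑ x ∈ X₀f, evalF c x * χ (-x) with hB1
      have himg : X₀f.image (fun x => (q ^ 2) • x) = X₀f := by
        refine Finset.eq_of_subset_of_card_le ?_ ?_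
        · intro y hy
          rw [Finset.mem_image] at hy
          obtain ⟨x, hx, rfl⟩ := hy
          rw [hmemf] at hx ⊢
          exact hX₀orbN x hx
        · rw [Finset.card_image_of_injective _ hbij2.injective]
      have hreindex : ∀ g : G → K, ∑ x ∈ X₀f, g ((q ^ 2) • x) = ∑ x ∈ X₀f, g x := by
        intro g
        conv_rhs => rw [← himg]
        rw [Finset.sum_image (fun x _ y _ h => hbij2.injective h)]
      have hB1fix : ∀ χ : AddChar G K, (B1 χ) ^ q ^ 2 = B1 χ := by
        intro χ
        have hφ2 : ∀ t : K, φ (φ t) = t ^ q ^ 2 := by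
          intro t
          rw [hφ, hφ, ← pow_mul, ← pow_two]
        rw [← hφ2]
        simp only [hB1]
        rw [map_mul, map_mul, map_inv₀, map_inv₀, map_natCast, map_natCast,
          map_sum, map_sum]
        congr 1
        have hterm : ∀ x : G, φ (φ (evalF c x * χ (-x)))
            = evalF c ((q ^ 2) • x) * χ (-((q ^ 2) • x)) := by
          intro x
          rw [map_mul, map_mul, hφ2, hφ2, ← aux_evalF_frob q φ hφ halg c x,
            ← AddChar.map_nsmul_eq_pow, smul_neg]
        rw [Finset.sum_congr rfl fun x _ => hterm x]
        exact hreindex (fun x => evalF c x * χ (-x))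
      choose a1 ha1 using fun χ => hrange _ (hB1fix χ)
      have heval_a1 : ∀ y : G, evalF a1 y = if y ∈ X₀f then evalF c y else 0 := by
        intro y
        have h0 : evalF a1 y = ∑ χ : AddChar G K, B1 χ * χ y := by
          rw [evalF]
          exact Finset.sum_congr rfl fun χ _ => by rw [ha1]
        rw [h0]
        calc ∑ χ : AddChar G K, B1 χ * χ y
            = ∑ χ : AddChar G K, ∑ x ∈ X₀f,
                ((Fintype.card (AddChar G K) : K))⁻¹ * (evalF c x * χ (y - x)) := by
              refine Finset.sum_congr rfl fun χ _ => ?_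
              simp only [hB1]
              rw [mul_assoc, Finset.sum_mul, Finset.mul_sum]
              refine Finset.sum_congr rfl fun x _ => ?_
              congr 1
              rw [mul_assoc]
              congr 1
              rw [← neg_add_eq_sub, AddChar.map_add_eq_mul]
          _ = ∑ x ∈ X₀f, ((Fintype.card (AddChar G K) : K))⁻¹
                * (evalF c x * ∑ χ : AddChar G K, χ (y - x)) := by
              rw [Finset.sum_comm]
              refine Finset.sum_congr rfl fun x _ => ?_
              simp only [Finset.mul_sum]
          _ = ∑ x ∈ X₀f, (if y = x then evalF c x else 0) := by
              refine Finset.sum_congr rfl fun x _ => ?_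
              rw [aux_dual_orth ⟨ζ, hζ⟩ (y - x)]
              by_cases h : y = x
              · rw [if_pos (by rw [h, sub_self]), if_pos h]
                field_simp
              · rw [if_neg (fun hh => h (sub_eq_zero.mp hh)), if_neg h]
                ring
          _ = if y ∈ X₀f then evalF c y else 0 := by
              rw [Finset.sum_ite_eq X₀f y (fun x => evalF c x)]
      refine ⟨c - a1, ?_, a1, ?_, by rw [sub_add_cancel]⟩
      · intro y hy
        rw [hsub]
        rcases hy with h | h
        · rw [hcZ y h, heval_a1, if_neg (fun hh => hZX₀' y h ((hmemf y).mp hh)), sub_zero]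
        · rw [heval_a1, if_pos ((hmemf y).mpr h), sub_self]
      · intro y hy
        rw [heval_a1, if_neg]
        intro hh
        rw [hmemf] at hh
        rcases hy with h | h
        · exact hZX₀' y h hh
        · exact hX₀X₁' y hh h
    · intro hc b0 hb0
      obtain ⟨a, ha, b, hb, rfl⟩ := hc
      have hadd : herm q (a + b) b0 = herm q a b0 + herm q b b0 := by
        rw [herm, herm, herm, ← Finset.sum_add_distrib]
        exact Finset.sum_congr rfl fun ψ _ => by rw [Pi.add_apply, add_mul]
      have hY0 : ∀ y : G, y ∉ X₀ ∪ X₁ → ((-(q : ℤ)) • y) ∈ Z ∪ X₀ := by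
        intro y hy
        rcases hmem3 y with h | h | h
        · exact Or.inl (hZneg y h)
        · exact absurd (Or.inl h) hy
        · exact absurd (Or.inr h) hy
      have hY1 : ∀ y : G, y ∉ X₀ ∪ X₁ → ((-(q : ℤ)) • y) ∈ Z ∪ X₁ := by
        intro y hy
        rcases hmem3 y with h | h | h
        · exact Or.inl (hZneg y h)
        · exact absurd (Or.inl h) hy
        · exact absurd (Or.inr h) hy
      rw [hadd, hforward (Z ∪ X₀) (X₀ ∪ X₁) hY0 a ha b0 hb0,
        hforward (Z ∪ X₁) (X₀ ∪ X₁) hY1 b hb b0 hb0, add_zero]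
  -- Part 1b : intersection is {0}
  · ext a
    constructor
    · intro ⟨h0, h1⟩
      have hall : ∀ y : G, evalF a y = 0 := by
        intro y
        rcases hmem3 y with h | h | h
        · exact h0 y (Or.inl h)
        · exact h0 y (Or.inr h)
        · exact h1 y (Or.inr h)
      exact hzero_code a hall
    · intro ha
      rw [Set.mem_singleton_iff] at ha
      subst ha
      constructor <;> intro y _ <;>
        simp [evalF]
  -- Part 2 : -q splits C₀
  · rintro ⟨h20, h21⟩
    ext c
    constructor
    · intro hc
      intro w hw
      have hW : ∀ x ∈ Z ∪ X₁, (q ^ 2) • x ∈ Z ∪ X₁ := by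
        intro x hx
        rcases hx with h | h
        · exact Or.inl (hZorbN x h)
        · exact Or.inr (hX₁orbN x h)
      have hWX : ∀ y ∈ Z ∪ X₁, y ∉ X₀ := by
        intro y hy hy2
        rcases hy with h | h
        · exact hZX₀' y h hy2
        · exact hX₀X₁' y hy2 h
      refine hkernel (Z ∪ X₁) X₀ hW hWX c hc w ?_
      rcases hw with h | h
      · obtain ⟨z, hz, hzw⟩ := hZrep w h
        exact ⟨z, Or.inl hz, hzw⟩
      · rw [← h21] at h
        obtain ⟨z, hz, hzw⟩ := h
        exact ⟨z, Or.inr hz, hzw⟩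
    · intro hc b hb
      refine hforward (Z ∪ X₀) X₀ ?_ c hc b hb
      intro y hy
      rcases hmem3 y with h | h | h
      · exact Or.inl (hZneg y h)
      · exact absurd h hy
      · refine Or.inr ?_
        rw [← h21]
        exact ⟨y, h, rfl⟩
  -- Part 3 : -q stabilizes C₀
  · rintro ⟨h30, h31⟩
    ext c
    constructor
    · intro hc
      intro w hw
      have hW : ∀ x ∈ Z ∪ X₁, (q ^ 2) • x ∈ Z ∪ X₁ := by
        intro x hx
        rcases hx with h | h
        · exact Or.inl (hZorbN x h)
        · exact Or.inr (hX₁orbN x h)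
      have hWX : ∀ y ∈ Z ∪ X₁, y ∉ X₀ := by
        intro y hy hy2
        rcases hy with h | h
        · exact hZX₀' y h hy2
        · exact hX₀X₁' y hy2 h
      refine hkernel (Z ∪ X₁) X₀ hW hWX c hc w ?_
      rcases hw with h | h
      · obtain ⟨z, hz, hzw⟩ := hZrep w h
        exact ⟨z, Or.inl hz, hzw⟩
      · rw [← h31] at h
        obtain ⟨z, hz, hzw⟩ := h
        exact ⟨z, Or.inr hz, hzw⟩
    · intro hc b hb
      refine hforward (Z ∪ X₁) X₀ ?_ c hc b hb
      intro y hy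
      rcases hmem3 y with h | h | h
      · exact Or.inl (hZneg y h)
      · exact absurd h hy
      · refine Or.inr ?_
        rw [← h31]
        exact ⟨y, h, rfl⟩
end

section
/- Let C = I_X be an ideal in F[G*]. Then C is Hermitian self-orthogonal (C ⊆ C^{⊥_H}) if and only if C = C_0^Z for some splitting (Z, X_0, X_1) of G which is split by −q; that is, if and only if C is a subcode I_{Z ∪ X_0} arising from a partition G = Z ∪ X_0 ∪ X_1 with τ_{−q}(X_0) = X_1 and τ_{−q}(X_1) = X_0. -/
open scoped BigOperators
open scoped BigOperators

/-!
Evaluation identifies `F[G*]` with the functions `g : G → K` satisfying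
`g (|F| • x) = g x ^ |F|`: Fourier inversion recovers the coefficients, and they lie in `F`
because `F` is the fixed field of the `|F|`-power Frobenius of `K`. Under this identification
`I_X` consists of the functions vanishing on `X`, and orthogonality of characters turns the
Hermitian form into `|G| ⟨a, b⟩_H = ∑ x, a(-q x) b(x)^q`, where `a(x) = evalF a x`.

If `τ_{-q}` maps `Xᶜ` into `X`, every term of this sum vanishes. Conversely, if `y` and `-q y`
both lie outside `X`, testing self-orthogonality on `x ↦ [x ∉ X] χ x` and `x ↦ [x ∉ X]` for all
characters `χ` shows that the indicator of `{x | x ∉ X ∧ -q x ∉ X}` has vanishing Fourier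
transform, although it is nonzero at `y`. Finally, `τ_{-q}(Xᶜ) ⊆ X` amounts to a splitting with
`X₁ = Xᶜ` and `X₀ = τ_{-q}(Xᶜ)`.
-/

lemma hasEnoughRootsOfUnity_exponent_multiplicative {G K : Type*} [AddCommGroup G] [Field K]
    [HasEnoughRootsOfUnity K (AddMonoid.exponent G)] :
    HasEnoughRootsOfUnity K (Monoid.exponent (Multiplicative G)) := by
  rwa [Monoid.exponent_multiplicative]

namespace AddChar

variable {G K : Type*} [AddCommGroup G] [Fintype G] [Field K]
  [HasEnoughRootsOfUnity K (AddMonoid.exponent G)]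

lemma exists_apply_ne_one_of_hasEnoughRootsOfUnity {x : G} (hx : x ≠ 0) :
    ∃ ψ : AddChar G K, ψ x ≠ 1 := by
  have := hasEnoughRootsOfUnity_exponent_multiplicative (G := G) (K := K)
  obtain ⟨φ, hφ⟩ := CommGroup.exists_apply_ne_one_of_hasEnoughRootsOfUnity
    (Multiplicative G) K (a := .ofAdd x) (by simpa using hx)
  exact ⟨toMonoidHomEquiv.symm ((Units.coeHom K).comp φ), fun h ↦ hφ (Units.ext h)⟩

lemma card_eq_of_hasEnoughRootsOfUnity [Fintype (AddChar G K)] :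
    Fintype.card (AddChar G K) = Fintype.card G := by
  have := hasEnoughRootsOfUnity_exponent_multiplicative (G := G) (K := K)
  rw [← Nat.card_eq_fintype_card, ← Nat.card_eq_fintype_card,
    Nat.card_congr (toMonoidHomEquiv.trans MonoidHom.toHomUnitsMulEquiv.toEquiv),
    CommGroup.card_monoidHom_of_hasEnoughRootsOfUnity]
  rfl

lemma sum_apply_eq_ite_of_hasEnoughRootsOfUnity [Fintype (AddChar G K)] [DecidableEq G]
    (x : G) : ∑ ψ : AddChar G K, ψ x = if x = 0 then (Fintype.card G : K) else 0 := by
  have hsep : doubleDualEmb x = (0 : AddChar (AddChar G K) K) ↔ x = 0 := by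
    refine ⟨fun h ↦ by_contra fun hx ↦ ?_, fun h ↦ by simp [h]⟩
    obtain ⟨ψ, hψ⟩ := exists_apply_ne_one_of_hasEnoughRootsOfUnity (K := K) hx
    exact hψ (DFunLike.congr_fun h ψ)
  classical
  simpa [hsep, card_eq_of_hasEnoughRootsOfUnity] using
    sum_eq_ite (doubleDualEmb x : AddChar (AddChar G K) K)

end AddChar

open Polynomial in
lemma FiniteField.mem_range_algebraMap_of_pow_card_eq {F K : Type*} [Field F] [Fintype F]
    [Field K] [Algebra F K] {z : K} (hz : z ^ Fintype.card F = z) :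
    z ∈ (algebraMap F K).range := by
  have hF : 1 < Fintype.card F := Fintype.one_lt_card
  have hsplit : (X ^ Fintype.card F - X : F[X]).Splits := by
    rw [splits_iff_card_roots, roots_X_pow_card_sub_X, X_pow_card_sub_X_natDegree_eq F hF]
    rfl
  exact hsplit.mem_range_of_isRoot (X_pow_card_sub_X_ne_zero F hF) (by simp [hz])

namespace Nat.Coprime

variable {G : Type*} [AddCommGroup G] {n : ℕ}

lemma neg_zsmul_bijective (hn : (Nat.card G).Coprime n) :
    Function.Bijective (fun x : G ↦ (-(n : ℤ)) • x) := by
  simp_rw [neg_smul, natCast_zsmul]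
  exact neg_bijective.comp hn.nsmul_right_bijective

lemma nsmul_mem_iff [Finite G] {X : Set G} (hn : (Nat.card G).Coprime n)
    (hX : ∀ x ∈ X, n • x ∈ X) {x : G} : n • x ∈ X ↔ x ∈ X := by
  refine ⟨fun hx ↦ ?_, hX x⟩
  have hbij : Set.BijOn (n • ·) X X :=
    (X.toFinite.injOn_iff_bijOn_of_mapsTo hX).mp hn.nsmul_right_bijective.injective.injOn
  obtain ⟨y, hy, hyx⟩ := hbij.surjOn hx
  rwa [← hn.nsmul_right_bijective.injective hyx]

end Nat.Coprime

section Fourier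

variable {G F K : Type} [AddCommGroup G] [Fintype G] [Field F] [Field K] [Algebra F K]
  [Fintype (AddChar G K)]

lemma sum_evalF_mul_apply_neg (a : AddChar G K → F) (φ : AddChar G K) :
    ∑ x, evalF a x * φ (-x) = Fintype.card G * algebraMap F K (a φ) := by
  classical
  have horth (ψ : AddChar G K) :
      ∑ x, ψ x * φ (-x) = if ψ = φ then (Fintype.card G : K) else 0 := by
    simpa [← AddChar.sub_apply, sub_eq_zero] using AddChar.sum_eq_ite (ψ - φ)
  simp_rw [evalF, Finset.sum_mul, mul_assoc]
  rw [Finset.sum_comm]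
  simp_rw [← Finset.mul_sum, horth, mul_ite, mul_zero, Finset.sum_ite_eq', Finset.mem_univ,
    if_true, mul_comm]

variable [HasEnoughRootsOfUnity K (AddMonoid.exponent G)]

lemma exists_evalF_eq_card_mul [Fintype F] (hcop : (Nat.card G).Coprime (Fintype.card F))
    {g : G → K} (hg : ∀ x, g (Fintype.card F • x) = g x ^ Fintype.card F) :
    ∃ a : AddChar G K → F, ∀ x, evalF a x = Fintype.card G * g x := by
  classical
  set Q := Fintype.card F
  have hfix (ψ : AddChar G K) : (∑ y, g y * ψ (-y)) ^ Q = ∑ y, g y * ψ (-y) :=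
    calc (∑ y, g y * ψ (-y)) ^ Q = FiniteField.frobeniusAlgHom F K (∑ y, g y * ψ (-y)) := rfl
      _ = ∑ y, g (Q • y) * ψ (-(Q • y)) := by
        rw [map_sum]
        refine Finset.sum_congr rfl fun y _ ↦ ?_
        rw [hg, ← smul_neg, AddChar.map_nsmul_eq_pow, ← mul_pow]
        rfl
      _ = ∑ y, g y * ψ (-y) := hcop.nsmul_right_bijective.sum_comp fun y ↦ g y * ψ (-y)
  choose a ha using fun ψ ↦ FiniteField.mem_range_algebraMap_of_pow_card_eq (hfix ψ)
  refine ⟨a, fun x ↦ ?_⟩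
  simp_rw [evalF, ha, Finset.sum_mul, mul_assoc, ← AddChar.map_add_eq_mul]
  rw [Finset.sum_comm]
  simp_rw [← Finset.mul_sum, AddChar.sum_apply_eq_ite_of_hasEnoughRootsOfUnity, neg_add_eq_sub,
    sub_eq_zero, mul_ite, mul_zero, Finset.sum_ite_eq, Finset.mem_univ, if_true, mul_comm]

lemma eq_zero_of_forall_sum_mul_apply_eq_zero (hG : (Fintype.card G : K) ≠ 0) {σ : G → G}
    (hσ : Function.Injective σ) {w : G → K} (h : ∀ χ : AddChar G K, ∑ x, w x * χ (σ x) = 0)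
    (y : G) : w y = 0 := by
  classical
  have hsum : ∑ χ : AddChar G K, χ (-σ y) * ∑ x, w x * χ (σ x) = Fintype.card G * w y := by
    simp_rw [Finset.mul_sum]
    rw [Finset.sum_comm]
    simp_rw [mul_left_comm _ (w _), ← Finset.mul_sum, ← AddChar.map_add_eq_mul,
      AddChar.sum_apply_eq_ite_of_hasEnoughRootsOfUnity, neg_add_eq_sub, sub_eq_zero,
      hσ.eq_iff, mul_ite, mul_zero, Finset.sum_ite_eq', Finset.mem_univ, if_true, mul_comm]
  simpa [h, hG] using hsum

end Fourier

section SelfOrthogonal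

variable {G F K : Type} [AddCommGroup G] [Fintype G] [Field F] [Field K] [Algebra F K]
  [Fintype (AddChar G K)] {p k q : ℕ} [ExpChar K p]

lemma card_mul_herm_eq (hq : q = p ^ k) (hcop : (Nat.card G).Coprime q)
    (a b : AddChar G K → F) :
    (Fintype.card G : K) * algebraMap F K (herm q a b)
      = ∑ x, evalF a ((-(q : ℤ)) • x) * evalF b x ^ q := by
  have hpow (x : G) :
      evalF b x ^ q = ∑ φ, algebraMap F K (b φ ^ q) * φ (-((-(q : ℤ)) • x)) := by
    rw [evalF, hq, sum_pow_char_pow]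
    refine Finset.sum_congr rfl fun φ _ ↦ ?_
    rw [mul_pow, map_pow, neg_smul, neg_neg, natCast_zsmul, AddChar.map_nsmul_eq_pow]
  calc (Fintype.card G : K) * algebraMap F K (herm q a b)
      = ∑ φ, algebraMap F K (b φ ^ q) * ∑ x, evalF a x * φ (-x) := by
        rw [herm, map_sum, Finset.mul_sum]
        refine Finset.sum_congr rfl fun φ _ ↦ ?_
        rw [sum_evalF_mul_apply_neg, map_mul]
        ring
    _ = ∑ φ, algebraMap F K (b φ ^ q) *
          ∑ x, evalF a ((-(q : ℤ)) • x) * φ (-((-(q : ℤ)) • x)) := by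
        refine Finset.sum_congr rfl fun φ _ ↦ ?_
        rw [hcop.neg_zsmul_bijective.sum_comp fun y ↦ evalF a y * φ (-y)]
    _ = ∑ x, evalF a ((-(q : ℤ)) • x) * evalF b x ^ q := by
        simp_rw [hpow, Finset.mul_sum]
        rw [Finset.sum_comm]
        exact Finset.sum_congr rfl fun x _ ↦ Finset.sum_congr rfl fun φ _ ↦ by ring

lemma herm_eq_zero_of_tauImg_compl_subset (hq : q = p ^ k) (hcop : (Nat.card G).Coprime q)
    (hG : (Fintype.card G : K) ≠ 0) {X : Set G} (hX : tauImg (-(q : ℤ)) Xᶜ ⊆ X)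
    {a b : AddChar G K → F} (ha : a ∈ codeSet F K X) (hb : b ∈ codeSet F K X) :
    herm q a b = 0 := by
  have hsum : ∑ x, evalF a ((-(q : ℤ)) • x) * evalF b x ^ q = 0 :=
    Finset.sum_eq_zero fun x _ ↦ by
      by_cases hx : x ∈ X
      · rw [hb x hx, zero_pow (hq ▸ pow_ne_zero k (expChar_pos K p).ne'), mul_zero]
      · rw [ha _ (hX ⟨x, hx, rfl⟩), zero_mul]
  have := card_mul_herm_eq hq hcop a b
  rw [hsum, mul_eq_zero] at this
  simpa [hG] using this

variable [Fintype F] [HasEnoughRootsOfUnity K (AddMonoid.exponent G)]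

lemma sum_mul_pow_eq_zero_of_forall_herm_eq_zero (hq : q = p ^ k)
    (hcop : (Nat.card G).Coprime q) (hcopF : (Nat.card G).Coprime (Fintype.card F))
    (hG : (Fintype.card G : K) ≠ 0) {X : Set G}
    (hself : ∀ a ∈ codeSet F K X, ∀ b ∈ codeSet F K X, herm q a b = 0) {g h : G → K}
    (hg : ∀ x, g (Fintype.card F • x) = g x ^ Fintype.card F)
    (hh : ∀ x, h (Fintype.card F • x) = h x ^ Fintype.card F)
    (hgX : ∀ x ∈ X, g x = 0) (hhX : ∀ x ∈ X, h x = 0) :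
    ∑ x, g ((-(q : ℤ)) • x) * h x ^ q = 0 := by
  obtain ⟨a, ha⟩ := exists_evalF_eq_card_mul hcopF hg
  obtain ⟨b, hb⟩ := exists_evalF_eq_card_mul hcopF hh
  have hmem {c : AddChar G K → F} {f : G → K} (hc : ∀ x, evalF c x = Fintype.card G * f x)
      (hf : ∀ x ∈ X, f x = 0) : c ∈ codeSet F K X := fun x hx ↦ by rw [hc, hf x hx, mul_zero]
  have hherm := card_mul_herm_eq hq hcop a b
  rw [hself a (hmem ha hgX) b (hmem hb hhX), map_zero, mul_zero] at hherm
  have : (Fintype.card G : K) ^ (q + 1) * ∑ x, g ((-(q : ℤ)) • x) * h x ^ q = 0 := by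
    rw [hherm, Finset.mul_sum]
    exact Finset.sum_congr rfl fun x _ ↦ by rw [ha, hb]; ring
  simpa [hG] using this

lemma neg_zsmul_mem_of_forall_herm_eq_zero (hq : q = p ^ k)
    (hcop : (Nat.card G).Coprime q) (hcopF : (Nat.card G).Coprime (Fintype.card F))
    (hG : (Fintype.card G : K) ≠ 0) {X : Set G} (hX : ∀ x ∈ X, Fintype.card F • x ∈ X)
    (hself : ∀ a ∈ codeSet F K X, ∀ b ∈ codeSet F K X, herm q a b = 0) {y : G} (hy : y ∉ X) :
    (-(q : ℤ)) • y ∈ X := by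
  classical
  set w : G → K := fun x ↦ if x ∈ X ∨ (-(q : ℤ)) • x ∈ X then 0 else 1
  have hw (χ : AddChar G K) : ∑ x, w x * χ ((-(q : ℤ)) • x) = 0 := by
    have hQ : Fintype.card F ≠ 0 := Fintype.card_ne_zero
    have hq0 : q ≠ 0 := hq ▸ pow_ne_zero k (expChar_pos K p).ne'
    rw [← sum_mul_pow_eq_zero_of_forall_herm_eq_zero hq hcop hcopF hG hself
      (g := fun x ↦ if x ∈ X then 0 else χ x) (h := fun x ↦ if x ∈ X then 0 else 1)
      (fun x ↦ by simp [hcopF.nsmul_mem_iff hX, hQ, AddChar.map_nsmul_eq_pow])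
      (fun x ↦ by simp [hcopF.nsmul_mem_iff hX, hQ])
      (fun x hx ↦ if_pos hx) (fun x hx ↦ if_pos hx)]
    refine Finset.sum_congr rfl fun x _ ↦ ?_
    by_cases hx : x ∈ X <;> by_cases hx' : (-(q : ℤ)) • x ∈ X <;>
      simp only [w, hx, hx', or_true, or_false, if_true, if_false, zero_mul, mul_zero,
        one_mul, mul_one, one_pow, zero_pow hq0]
  by_contra hy'
  have := eq_zero_of_forall_sum_mul_apply_eq_zero hG hcop.neg_zsmul_bijective.injective hw y
  simp only [w, hy, hy', or_self, if_false] at this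
  exact one_ne_zero this

end SelfOrthogonal

section Splitting

variable {G : Type} [AddCommGroup G]

lemma tauImg_tauImg_compl [Finite G] {s : ℤ} {n : ℕ} (hsn : s * s = n)
    (hn : (Nat.card G).Coprime n) {X : Set G} (hX : ∀ x ∈ X, n • x ∈ X) :
    tauImg s (tauImg s Xᶜ) = Xᶜ := by
  simp_rw [tauImg, Set.image_image, smul_smul, hsn, natCast_zsmul]
  ext x
  refine ⟨fun ⟨y, hy, hyx⟩ ↦ hyx ▸ mt (hn.nsmul_mem_iff hX).mp hy, fun hx ↦ ?_⟩
  obtain ⟨y, rfl⟩ := hn.nsmul_right_bijective.surjective x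
  exact ⟨y, mt (hn.nsmul_mem_iff hX).mpr hx, rfl⟩

lemma tauImg_compl_subset_iff_exists_splitting {s : ℤ} {X : Set G}
    (hs : tauImg s (tauImg s Xᶜ) = Xᶜ) :
    tauImg s Xᶜ ⊆ X ↔ ∃ Z X₀ X₁ : Set G,
      Z ∪ X₀ ∪ X₁ = Set.univ ∧
      Disjoint Z X₀ ∧ Disjoint Z X₁ ∧ Disjoint X₀ X₁ ∧
      tauImg s X₀ = X₁ ∧ tauImg s X₁ = X₀ ∧ X = Z ∪ X₀ := by
  constructor
  · intro h
    refine ⟨X \ tauImg s Xᶜ, tauImg s Xᶜ, Xᶜ, ?_, Set.disjoint_sdiff_left,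
      Set.disjoint_of_subset_left Set.sdiff_subset disjoint_compl_right,
      Set.disjoint_of_subset_left h disjoint_compl_right, hs, rfl,
      (Set.sdiff_union_of_subset h).symm⟩
    rw [Set.sdiff_union_of_subset h, Set.union_compl_self]
  · rintro ⟨Z, X₀, X₁, hcover, -, -, -, -, hX₁, rfl⟩
    have hcompl : (Z ∪ X₀)ᶜ ⊆ X₁ := fun x hx ↦
      ((hcover ▸ Set.mem_univ x : x ∈ Z ∪ X₀ ∪ X₁)).resolve_left hx
    exact (Set.image_mono hcompl).trans (hX₁.le.trans Set.subset_union_right)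

end Splitting

/-- Let `C = I_X` be an ideal code in `F[G*]` (so `X` is a union of
`⟨τ_{q²}⟩`-orbits).  Then `C` is Hermitian self-orthogonal if and only if `C = C₀^Z` for
some splitting `(Z, X₀, X₁)` of `G` which is split by `-q`; that is, iff `C = I_{Z ∪ X₀}`
for a partition `G = Z ∪ X₀ ∪ X₁` with `τ_{-q}(X₀) = X₁` and `τ_{-q}(X₁) = X₀`. -/
theorem stmt4
    {G : Type} [AddCommGroup G] [Fintype G]
    {F K : Type} [Field F] [Fintype F] [Field K] [Algebra F K]
    [Fintype (AddChar G K)]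
    (q : ℕ) (hq : IsPrimePow q)
    (hF : Fintype.card F = q ^ 2)
    (hn : Nat.Coprime (Fintype.card G) q)
    (hK : ∃ ζ : K, IsPrimitiveRoot ζ (AddMonoid.exponent G))
    (X : Set G)
    (hX : ∀ x ∈ X, ((q : ℤ) ^ 2) • x ∈ X) :
    (∀ a ∈ codeSet F K X, ∀ b ∈ codeSet F K X, herm q a b = 0) ↔
      ∃ Z X₀ X₁ : Set G,
        Z ∪ X₀ ∪ X₁ = Set.univ ∧
        Disjoint Z X₀ ∧ Disjoint Z X₁ ∧ Disjoint X₀ X₁ ∧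
        tauImg (-(q : ℤ)) X₀ = X₁ ∧ tauImg (-(q : ℤ)) X₁ = X₀ ∧
        X = Z ∪ X₀ := by
  obtain ⟨p, k, hprime, hk, hpk⟩ := hq
  have hp : p.Prime := hprime.nat_prime
  have : Fact p.Prime := ⟨hp⟩
  have : CharP F p := charP_of_card_eq_prime_pow (hF.trans (by rw [← hpk, ← pow_mul]))
  have : CharP K p := charP_of_injective_algebraMap (algebraMap F K).injective p
  have : HasEnoughRootsOfUnity K (AddMonoid.exponent G) := ⟨hK, inferInstance⟩
  have hcop : (Nat.card G).Coprime q := by rwa [Nat.card_eq_fintype_card]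
  have hcopF : (Nat.card G).Coprime (Fintype.card F) := hF ▸ hcop.pow_right 2
  have hG : (Fintype.card G : K) ≠ 0 := by
    rw [Ne, CharP.cast_eq_zero_iff K p, ← hp.coprime_iff_not_dvd]
    exact (hn.coprime_dvd_right (hpk ▸ dvd_pow_self p hk.ne')).symm
  have hXF : ∀ x ∈ X, Fintype.card F • x ∈ X := fun x hx ↦ by
    simpa [hF, ← natCast_zsmul] using hX x hx
  rw [← tauImg_compl_subset_iff_exists_splitting
    (tauImg_tauImg_compl (by rw [neg_mul_neg, hF]; push_cast; ring) hcopF hXF)]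
  refine ⟨fun hself ↦ ?_, fun h a ha b hb ↦
    herm_eq_zero_of_tauImg_compl_subset hpk.symm hcop hG h ha hb⟩
  rintro _ ⟨y, hy, rfl⟩
  exact neg_zsmul_mem_of_forall_herm_eq_zero hpk.symm hcop hcopF hG hXF hself hy
end

section
/- Let (Z = {0}, X_0, X_1) be a splitting of G in which X_0 and X_1 are unions of ⟨τ_{q²}⟩-orbits, and let C_0, C_1 be the corresponding split group codes over F = F_{q²}. Then: (1) the extended codes ~C_0 and ~C_1 are equivalent codes; (2) if −q splits C_0, then ~C_0^{⊥_H} = ~C_0 and ~C_1^{⊥_H} = ~C_1; (3) if −q stabilizes C_0, then ~C_0^{⊥_H} = ~C_1 and ~C_1^{⊥_H} = ~C_0. -/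
open scoped BigOperators
open scoped BigOperators

/-- The extension `~f = (f, -γ f(0))` of the element of `F[G*]` with coefficient function
`a`; note `f(0) = ∑ ψ, a ψ` in `F`.  The extended word is indexed by
`Option (AddChar G K)`: `none` is the extension coordinate. -/
noncomputable def extWord {G : Type} [AddCommGroup G] {F K : Type} [Field F] [Field K]
    [Algebra F K] [Fintype (AddChar G K)] (γ : F) (a : AddChar G K → F) :
    Option (AddChar G K) → F :=
  fun o => o.elim (-γ * ∑ ψ : AddChar G K, a ψ) a

/-- The extended code `~C = { ~f : f ∈ C } ⊆ F[G*] × F`. -/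
noncomputable def extCode {G : Type} [AddCommGroup G] {F K : Type} [Field F] [Field K]
    [Algebra F K] [Fintype (AddChar G K)] (γ : F) (C : Set (AddChar G K → F)) :
    Set (Option (AddChar G K) → F) :=
  extWord γ '' C

/-- The Hermitian inner product on `F[G*] × F`:
`⟨(f,α),(g,β)⟩_H = ⟨f,g⟩_H + α β^q`. -/
noncomputable def hermExt {G : Type} [AddCommGroup G] {F K : Type} [Field F] [Field K]
    [Algebra F K] [Fintype (AddChar G K)] (q : ℕ) (v w : Option (AddChar G K) → F) : F :=
  ∑ o : Option (AddChar G K), v o * (w o) ^ q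

/-- The Hermitian dual of a code in `F[G*] × F`. -/
noncomputable def dualExt {G : Type} [AddCommGroup G] (F K : Type) [Field F] [Field K]
    [Algebra F K] [Fintype (AddChar G K)] (q : ℕ) (S : Set (Option (AddChar G K) → F)) :
    Set (Option (AddChar G K) → F) :=
  {v | ∀ w ∈ S, hermExt q v w = 0}



open Module

/-- Any subspace of `ι → K` has a basis in "reduced row echelon" form: there are pivot
coordinates on which the basis vectors are the identity matrix, and vanishing on all pivot
coordinates forces a vector of the subspace to be zero. -/
lemma exists_pivot_basis {K ι : Type} [Field K] [Fintype ι] (V : Submodule K (ι → K)) :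
    ∃ (κ : Type) (_ : Fintype κ) (bvec : Basis κ K V) (idx : κ → ι),
      (∀ j, (bvec j : ι → K) (idx j) = 1) ∧
      (∀ j k, k ≠ j → (bvec j : ι → K) (idx k) = 0) ∧
      (∀ v : V, (∀ k, (v : ι → K) (idx k) = 0) → v = 0) := by
  classical
  let φ : ι → Module.Dual K V := fun i => (LinearMap.proj i).comp V.subtype
  have hφ : ∀ i (v : V), φ i v = (v : ι → K) i := fun i v => rfl
  have hφspan : Submodule.span K (Set.range φ) = ⊤ := by
    have hco : (Submodule.span K (Set.range φ)).dualCoannihilator = ⊥ := by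
      rw [Submodule.eq_bot_iff]
      intro v hv
      rw [Submodule.mem_dualCoannihilator] at hv
      have h0 : ∀ i, (v : ι → K) i = 0 := fun i => hv (φ i) (Submodule.subset_span ⟨i, rfl⟩)
      exact Subtype.ext (funext h0)
    have h1 := Subspace.finrank_add_finrank_dualCoannihilator_eq
      (Submodule.span K (Set.range φ))
    rw [hco, finrank_bot, add_zero] at h1
    apply Submodule.eq_top_of_finrank_eq
    rw [h1, Subspace.dual_finrank_eq]
  obtain ⟨t, hts, htspan, htli⟩ := exists_linearIndependent K (Set.range φ)
  rw [hφspan] at htspan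
  have htfin : t.Finite := htli.setFinite
  haveI : Fintype ↥t := htfin.fintype
  let e : Basis ↥t K (Module.Dual K V) :=
    Basis.mk htli (by rw [Subtype.range_coe, htspan])
  have he : ∀ k : ↥t, e k = (k : Module.Dual K V) := fun k => Basis.mk_apply _ _ k
  have hidx : ∀ k : ↥t, ∃ i, φ i = (k : Module.Dual K V) := fun k => hts k.2
  choose idx hidxspec using hidx
  let bvec : Basis ↥t K V := e.dualBasis.map (Module.evalEquiv K V).symm
  have key : ∀ j k, (bvec j : ι → K) (idx k) = if k = j then 1 else 0 := by
    intro j k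
    have h1 : (bvec j : ι → K) (idx k) = φ (idx k) (bvec j) := rfl
    rw [h1, hidxspec, ← he]
    show e k ((Module.evalEquiv K V).symm (e.dualBasis j)) = _
    rw [Module.apply_evalEquiv_symm_apply, Basis.dualBasis_apply_self]
  refine ⟨↥t, inferInstance, bvec, idx, fun j => by rw [key]; simp,
    fun j k hk => by rw [key]; simp [hk], ?_⟩
  · intro v hv
    have hall : ∀ f : Module.Dual K V, f v = 0 := by
      intro f
      have hf : f ∈ Submodule.span K (Set.range e) := by
        rw [e.span_eq]; trivial
      induction hf using Submodule.span_induction with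
      | mem f hf =>
        obtain ⟨k, rfl⟩ := hf
        rw [he, ← hidxspec, hφ, hv]
      | zero => simp
      | add f g _ _ hf hg => simp [hf, hg]
      | smul c f _ hf => simp [hf]
    have := Module.forall_dual_apply_eq_zero_iff K (v : V)
    exact this.mp hall

/-- The `F`-points of a `K`-subspace of `ι → K`. -/
def ptsF (F : Type) {K ι : Type} [Field F] [Field K] [Algebra F K]
    (V : Submodule K (ι → K)) : Submodule F (ι → F) where
  carrier := {a | (fun i => algebraMap F K (a i)) ∈ V}
  add_mem' := by
    intro a b ha hb
    show (fun i => algebraMap F K ((a + b) i)) ∈ V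
    have h : (fun i => algebraMap F K ((a + b) i))
        = (fun i => algebraMap F K (a i)) + fun i => algebraMap F K (b i) := by
      funext i; simp
    rw [h]; exact V.add_mem ha hb
  zero_mem' := by
    show (fun i => algebraMap F K ((0 : ι → F) i)) ∈ V
    have h : (fun i => algebraMap F K ((0 : ι → F) i)) = (0 : ι → K) := by
      funext i; simp
    rw [h]; exact V.zero_mem
  smul_mem' := by
    intro c a ha
    show (fun i => algebraMap F K ((c • a) i)) ∈ V
    have h : (fun i => algebraMap F K ((c • a) i))
        = algebraMap F K c • fun i => algebraMap F K (a i) := by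
      funext i; simp [Algebra.smul_def]
    rw [h]; exact V.smul_mem _ ha

lemma mem_ptsF {F K ι : Type} [Field F] [Field K] [Algebra F K]
    {V : Submodule K (ι → K)} {a : ι → F} :
    a ∈ ptsF F V ↔ (fun i => algebraMap F K (a i)) ∈ V := Iff.rfl

/-- Galois-type descent: if a subspace `V ⊆ K^ι` is stable under the coordinatewise
endomorphism `σ` whose fixed field is (the image of) `F`, then the `F`-points of `V`
have the same dimension as `V`. -/
lemma finrank_ptsF {F K ι : Type} [Field F] [Field K] [Algebra F K] [Fintype ι]
    (σ : K →+* K) (hσalg : ∀ c : F, σ (algebraMap F K c) = algebraMap F K c)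
    (hσ : ∀ y : K, σ y = y → ∃ c : F, algebraMap F K c = y)
    (V : Submodule K (ι → K)) (hV : ∀ v ∈ V, (fun i => σ (v i)) ∈ V) :
    Module.finrank F (ptsF F V) = Module.finrank K V := by
  classical
  obtain ⟨κ, _, bvec, idx, hdiag, hoff, hinj⟩ := exists_pivot_basis V
  have hfix : ∀ (j : κ) (i : ι), σ ((bvec j : ι → K) i) = (bvec j : ι → K) i := by
    intro j i
    have hw : (fun i => σ ((bvec j : ι → K) i)) ∈ V := hV _ (bvec j).2
    have hwc : ∀ k, ((⟨_, hw⟩ - bvec j : V) : ι → K) (idx k) = 0 := by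
      intro k
      have hc : ((⟨_, hw⟩ - bvec j : V) : ι → K) (idx k)
          = σ ((bvec j : ι → K) (idx k)) - (bvec j : ι → K) (idx k) := rfl
      rw [hc]
      by_cases hk : k = j
      · subst hk; rw [hdiag, map_one, sub_self]
      · rw [hoff j k hk, map_zero, sub_self]
    have h0 := hinj _ hwc
    rw [sub_eq_zero] at h0
    have := congrArg (fun v : V => (v : ι → K) i) h0
    exact this
  have hex : ∀ (j : κ) (i : ι), ∃ c : F, algebraMap F K c = (bvec j : ι → K) i :=
    fun j i => hσ _ (hfix j i)
  choose a ha using hex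
  have haV : ∀ j, a j ∈ ptsF F V := by
    intro j
    rw [mem_ptsF]
    have : (fun i => algebraMap F K (a j i)) = (bvec j : ι → K) := funext fun i => ha j i
    rw [this]; exact (bvec j).2
  have hinjalg : Function.Injective (algebraMap F K) := (algebraMap F K).injective
  -- independence of the `a j`
  have hli : LinearIndependent F a := by
    rw [linearIndependent_iff']
    intro s c hc j hj
    have hK : ∑ k ∈ s, algebraMap F K (c k) • (bvec k : ι → K) = 0 := by
      have := congrArg (fun v : ι → F => fun i => algebraMap F K (v i)) hc
      calc ∑ k ∈ s, algebraMap F K (c k) • (bvec k : ι → K)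
          = fun i => algebraMap F K ((∑ k ∈ s, c k • a k) i) := by
            funext i
            simp only [Finset.sum_apply, Pi.smul_apply, smul_eq_mul, map_sum, map_mul]
            refine Finset.sum_congr rfl fun k _ => ?_
            rw [ha]
        _ = fun i => algebraMap F K ((0 : ι → F) i) := by rw [hc]
        _ = 0 := by funext i; simp
    have hbli : LinearIndependent K (fun j => (bvec j : ι → K)) :=
      bvec.linearIndependent.map' V.subtype (Submodule.ker_subtype V)
    have := linearIndependent_iff'.mp hbli s (fun k => algebraMap F K (c k)) hK j hj
    exact hinjalg (by simpa using this)
  -- spanning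
  have hspan : ptsF F V = Submodule.span F (Set.range a) := by
    apply le_antisymm
    · intro v hv
      have hvV : (fun i => algebraMap F K (v i)) ∈ V := hv
      have hrepr : v = ∑ k : κ, v (idx k) • a k := by
        have h0 : ∀ i, algebraMap F K ((v - ∑ k : κ, v (idx k) • a k) i) = 0 := by
          have hmem : (fun i => algebraMap F K ((v - ∑ k : κ, v (idx k) • a k) i)) ∈ V := by
            exact (ptsF F V).sub_mem hv (Submodule.sum_mem _ fun k _ =>
              (ptsF F V).smul_mem _ (haV k))
          have hvcoord : ∀ k', (fun i => algebraMap F K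
              ((v - ∑ k : κ, v (idx k) • a k) i)) (idx k') = 0 := by
            intro k'
            simp only [Pi.sub_apply, Finset.sum_apply, Pi.smul_apply, smul_eq_mul,
              map_sub, map_sum, map_mul, ha]
            rw [Finset.sum_eq_single k']
            · rw [hdiag, mul_one, sub_self]
            · intro k _ hk
              rw [hoff _ _ (by exact fun h => hk (by rw [h])), mul_zero]
            · intro h; exact absurd (Finset.mem_univ k') h
          have := hinj ⟨_, hmem⟩ (by intro k; exact hvcoord k)
          intro i
          exact congrArg (fun w : V => (w : ι → K) i) this
        funext i
        have := hinjalg (a₁ := (v - ∑ k : κ, v (idx k) • a k) i) (a₂ := 0)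
          (by rw [map_zero]; exact h0 i)
        have h2 : v i - (∑ k : κ, v (idx k) • a k) i = 0 := this
        exact sub_eq_zero.mp h2
      rw [hrepr]
      exact Submodule.sum_mem _ fun k _ => Submodule.smul_mem _ _
        (Submodule.subset_span ⟨k, rfl⟩)
    · rw [Submodule.span_le]
      rintro _ ⟨j, rfl⟩
      exact haV j
  rw [hspan, finrank_span_eq_card hli, Module.finrank_eq_card_basis bvec]


/-- The dual of a subspace `W ⊆ F^ι` with respect to the σ-sesquilinear pairing
`⟨v,w⟩ = ∑ i, v i * σ (w i)`. -/
def sigmaDual {F ι : Type} [Field F] [Fintype ι] (σ : F →+* F)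
    (W : Submodule F (ι → F)) : Submodule F (ι → F) where
  carrier := {v | ∀ w ∈ W, ∑ i, v i * σ (w i) = 0}
  add_mem' := by
    intro a b ha hb w hw
    simp only [Pi.add_apply, add_mul, Finset.sum_add_distrib, ha w hw, hb w hw, add_zero]
  zero_mem' := by intro w hw; simp
  smul_mem' := by
    intro c a ha w hw
    simp only [Pi.smul_apply, smul_eq_mul, mul_assoc, ← Finset.mul_sum, ha w hw, mul_zero]

lemma mem_sigmaDual {F ι : Type} [Field F] [Fintype ι] {σ : F →+* F}
    {W : Submodule F (ι → F)} {v : ι → F} :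
    v ∈ sigmaDual σ W ↔ ∀ w ∈ W, ∑ i, v i * σ (w i) = 0 := Iff.rfl

lemma finrank_sigmaDual {F ι : Type} [Field F] [Fintype F] [Fintype ι] (σ : F →+* F)
    (W : Submodule F (ι → F)) :
    Module.finrank F (sigmaDual σ W) + Module.finrank F W = Fintype.card ι := by
  classical
  have hσinj : Function.Injective σ := σ.injective
  have hσbij : Function.Bijective σ := (Finite.injective_iff_bijective).mp hσinj
  obtain ⟨σ', hσ'⟩ : ∃ σ' : F → F, ∀ x, σ (σ' x) = x := by
    exact ⟨fun x => (hσbij.surjective x).choose, fun x => (hσbij.surjective x).choose_spec⟩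
  -- a basis of W
  let b : Basis (Fin (Module.finrank F W)) F W := Module.finBasis F W
  let w : Fin (Module.finrank F W) → (ι → F) := fun j => (b j : ι → F)
  have hwli : LinearIndependent F w :=
    b.linearIndependent.map' W.subtype (Submodule.ker_subtype W)
  have hwspan : Submodule.span F (Set.range w) = W := by
    have h1 : Set.range w = ⇑W.subtype '' Set.range ⇑b := Set.range_comp W.subtype b
    have h2 := congrArg (Submodule.map W.subtype) b.span_eq
    rw [Submodule.map_span, Submodule.map_top, Submodule.range_subtype] at h2
    rw [h1, h2]
  -- the pairing map
  let L : (ι → F) →ₗ[F] (Fin (Module.finrank F W) → F) :=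
    { toFun := fun v => fun j => ∑ i, v i * σ (w j i)
      map_add' := by
        intro a b'; funext j
        simp [Pi.add_apply, add_mul, Finset.sum_add_distrib]
      map_smul' := by
        intro c a; funext j
        simp [Pi.smul_apply, smul_eq_mul, mul_assoc, ← Finset.mul_sum] }
  have hker : LinearMap.ker L = sigmaDual σ W := by
    ext v
    simp only [LinearMap.mem_ker, mem_sigmaDual]
    constructor
    · intro hv u hu
      rw [← hwspan] at hu
      induction hu using Submodule.span_induction with
      | mem u hu =>
        obtain ⟨j, rfl⟩ := hu
        exact congrFun hv j
      | zero => simp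
      | add u u' _ _ h1 h2 =>
        simp only [Pi.add_apply, map_add, mul_add, Finset.sum_add_distrib, h1, h2, add_zero]
      | smul c u _ h1 =>
        simp only [Pi.smul_apply, smul_eq_mul, map_mul]
        have hx : ∀ x, v x * (σ c * σ (u x)) = σ c * (v x * σ (u x)) := fun x => by ring
        rw [Finset.sum_congr rfl fun x _ => hx x, ← Finset.mul_sum, h1, mul_zero]
    · intro hv
      funext j
      exact hv (w j) (hwspan ▸ Submodule.subset_span (Set.mem_range_self j))
  have hsurj : Function.Surjective L := by
    rw [← LinearMap.range_eq_top]
    by_contra hne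
    obtain ⟨φ, hφ0, hφ⟩ : ∃ φ : Module.Dual F (Fin (Module.finrank F W) → F),
        φ ≠ 0 ∧ ∀ u ∈ LinearMap.range L, φ u = 0 := by
      have hbot : (LinearMap.range L).dualAnnihilator ≠ ⊥ := by
        intro h
        apply hne
        have heq : Module.finrank F ((Fin (Module.finrank F ↥W) → F) ⧸ LinearMap.range L)
            = Module.finrank F (LinearMap.range L).dualAnnihilator :=
          (Subspace.quotEquivAnnihilator (LinearMap.range L)).finrank_eq
        rw [h, finrank_bot] at heq
        have hq := Submodule.finrank_quotient_add_finrank (LinearMap.range L)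
        rw [heq, zero_add] at hq
        exact Submodule.eq_top_of_finrank_eq hq
      obtain ⟨φ, hφmem, hφne⟩ := Submodule.exists_mem_ne_zero_of_ne_bot hbot
      exact ⟨φ, hφne, (Submodule.mem_dualAnnihilator φ).mp hφmem⟩
    set c : Fin (Module.finrank F W) → F := fun j => φ (Pi.single j 1) with hc
    have hφeval : ∀ u : Fin (Module.finrank F W) → F, φ u = ∑ j, u j * c j := by
      intro u
      have hu : ∑ j, Pi.single j (u j) = u := Finset.univ_sum_single u
      conv_lhs => rw [← hu]
      rw [map_sum]
      refine Finset.sum_congr rfl fun j _ => ?_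
      have hsingle : (Pi.single j (u j) : Fin (Module.finrank F W) → F)
          = u j • (Pi.single j 1 : Fin (Module.finrank F W) → F) := by
        funext i
        simp [Pi.single_apply, mul_ite]
      rw [hsingle, map_smul, smul_eq_mul, hc]
    have hcne : ∃ j, c j ≠ 0 := by
      by_contra hall
      push_neg at hall
      apply hφ0
      refine LinearMap.ext fun u => ?_
      rw [hφeval]
      simp [hall]
    -- build the element of W contradicting independence
    set u0 : ι → F := ∑ j, σ' (c j) • w j with hu0
    have hu0W : u0 ∈ W := by
      rw [hu0]
      exact Submodule.sum_mem _ fun j _ => Submodule.smul_mem _ _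
        (hwspan ▸ Submodule.subset_span (Set.mem_range_self j))
    have hu0coord : ∀ i, σ (u0 i) = 0 := by
      intro i
      have h1 : ∀ v : ι → F, φ (L v) = ∑ i', v i' * σ (u0 i') := by
        intro v
        rw [hφeval]
        have : ∀ j, (L v) j * c j = ∑ i', v i' * (σ (w j i') * c j) := by
          intro j
          show (∑ i', v i' * σ (w j i')) * c j = _
          rw [Finset.sum_mul]
          exact Finset.sum_congr rfl fun i' _ => by ring
        rw [Finset.sum_congr rfl fun j _ => this j, Finset.sum_comm]
        refine Finset.sum_congr rfl fun i' _ => ?_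
        rw [← Finset.mul_sum]
        congr 1
        rw [hu0]
        simp only [Finset.sum_apply, Pi.smul_apply, smul_eq_mul, map_sum, map_mul, hσ']
        exact Finset.sum_congr rfl fun j _ => mul_comm _ _
      have h2 := h1 (Pi.single i 1 : ι → F)
      have h3 : φ (L (Pi.single i 1 : ι → F)) = 0 := hφ (L (Pi.single i 1 : ι → F)) ⟨_, rfl⟩
      rw [h2] at h3
      rw [← h3]
      symm
      rw [Finset.sum_eq_single i]
      · simp
      · intro i' _ hi'; simp [Pi.single_apply, hi']
      · intro h; exact absurd (Finset.mem_univ i) h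
    have hu00 : u0 = 0 := by
      funext i
      have := hu0coord i
      rw [← map_zero σ] at this
      exact hσinj this
    obtain ⟨j, hj⟩ := hcne
    have := linearIndependent_iff'.mp hwli Finset.univ (fun j => σ' (c j))
      (by rw [← hu0]; exact hu00) j (Finset.mem_univ j)
    apply hj
    have h4 : σ' (c j) = 0 := this
    rw [← hσ' (c j), h4, map_zero]
  have hrn := LinearMap.finrank_range_add_finrank_ker L
  rw [LinearMap.range_eq_top.mpr hsurj, hker] at hrn
  have htop : Module.finrank F (⊤ : Submodule F (Fin (Module.finrank F W) → F))
      = Module.finrank F W := by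
    rw [finrank_top, Module.finrank_fintype_fun_eq_card, Fintype.card_fin]
  rw [htop] at hrn
  have hdom : Module.finrank F (ι → F) = Fintype.card ι := by
    rw [Module.finrank_fintype_fun_eq_card]
  omega

section CharStuff
variable {G K : Type} [AddCommGroup G] [Fintype G] [Field K] [Fintype (AddChar G K)]

/-- The kernel of evaluation at all points of `X`, inside `K^{G*}`. -/
def evalKer (K : Type) {G : Type} [AddCommGroup G] [Field K] [Fintype (AddChar G K)]
    (X : Set G) : Submodule K (AddChar G K → K) where
  carrier := {c | ∀ x ∈ X, ∑ ψ : AddChar G K, c ψ * ψ x = 0}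
  add_mem' := by
    intro a b ha hb x hx
    simp only [Pi.add_apply, add_mul, Finset.sum_add_distrib, ha x hx, hb x hx, add_zero]
  zero_mem' := by intro x hx; simp
  smul_mem' := by
    intro c a ha x hx
    simp only [Pi.smul_apply, smul_eq_mul, mul_assoc, ← Finset.mul_sum, ha x hx, mul_zero]

lemma mem_evalKer {X : Set G} {c : AddChar G K → K} :
    c ∈ evalKer K X ↔ ∀ x ∈ X, ∑ ψ : AddChar G K, c ψ * ψ x = 0 := Iff.rfl

lemma addChar_exists_ne_one (hζ : ∃ ζ : K, IsPrimitiveRoot ζ (AddMonoid.exponent G))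
    {x : G} (hx : x ≠ 0) : ∃ ψ : AddChar G K, ψ x ≠ 1 := by
  haveI h1 : HasEnoughRootsOfUnity K (Monoid.exponent (Multiplicative G)) := by
    rw [Monoid.exponent_multiplicative]
    exact ⟨hζ, inferInstance⟩
  obtain ⟨φ, hφ⟩ := CommGroup.exists_apply_ne_one_of_hasEnoughRootsOfUnity
    (Multiplicative G) K (a := Multiplicative.ofAdd x)
    (by simpa using hx)
  refine ⟨AddChar.toMonoidHomEquiv.symm ((Units.coeHom K).comp φ), ?_⟩
  intro h
  apply hφ
  ext
  simpa using h

lemma sum_addChar_zero :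
    ∑ ψ : AddChar G K, ψ (0 : G) = (Fintype.card (AddChar G K) : K) := by
  simp [Finset.card_univ]

lemma sum_addChar_ne (hζ : ∃ ζ : K, IsPrimitiveRoot ζ (AddMonoid.exponent G))
    {x : G} (hx : x ≠ 0) : ∑ ψ : AddChar G K, ψ x = 0 := by
  obtain ⟨χ, hχ⟩ := addChar_exists_ne_one hζ hx
  have key : χ x * ∑ ψ : AddChar G K, ψ x = ∑ ψ : AddChar G K, ψ x := by
    rw [Finset.mul_sum]
    exact Fintype.sum_equiv (Equiv.mulLeft χ) _ _ fun ψ => rfl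
  have h2 : (χ x - 1) * ∑ ψ : AddChar G K, ψ x = 0 := by
    rw [sub_mul, one_mul, key, sub_self]
  rcases mul_eq_zero.mp h2 with h | h
  · exact absurd (sub_eq_zero.mp h) hχ
  · exact h

lemma card_addChar_eq (hζ : ∃ ζ : K, IsPrimitiveRoot ζ (AddMonoid.exponent G)) :
    Fintype.card (AddChar G K) = Fintype.card G := by
  haveI h1 : HasEnoughRootsOfUnity K (Monoid.exponent (Multiplicative G)) := by
    rw [Monoid.exponent_multiplicative]
    exact ⟨hζ, inferInstance⟩
  obtain ⟨e3⟩ := CommGroup.monoidHom_mulEquiv_of_hasEnoughRootsOfUnity (Multiplicative G) K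
  have e2 : (Multiplicative G →* K) ≃ (Multiplicative G →* Kˣ) :=
    { toFun := fun f => f.toHomUnits
      invFun := fun g => (Units.coeHom K).comp g
      left_inv := fun f => by ext a; simp
      right_inv := fun g => by ext a; simp }
  have := Nat.card_congr ((AddChar.toMonoidHomEquiv (A := G) (M := K)).trans
    (e2.trans e3.toEquiv))
  simpa [Nat.card_eq_fintype_card] using this

lemma exists_fourier_equiv (hζ : ∃ ζ : K, IsPrimitiveRoot ζ (AddMonoid.exponent G))
    (hnK : (Fintype.card G : K) ≠ 0) :
    ∃ E : (AddChar G K → K) ≃ₗ[K] (G → K),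
      ∀ c : AddChar G K → K, E c = fun x => ∑ ψ : AddChar G K, c ψ * ψ x := by
  classical
  set n : K := (Fintype.card G : K) with hn
  let L : (AddChar G K → K) →ₗ[K] (G → K) :=
    { toFun := fun c => fun x => ∑ ψ : AddChar G K, c ψ * ψ x
      map_add' := by
        intro a b; funext x
        simp [Pi.add_apply, add_mul, Finset.sum_add_distrib]
      map_smul' := by
        intro r a; funext x
        simp [Pi.smul_apply, smul_eq_mul, mul_assoc, Finset.mul_sum] }
  let M : (G → K) →ₗ[K] (AddChar G K → K) :=
    { toFun := fun g => fun φ => ∑ y : G, g y * φ (-y)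
      map_add' := by
        intro a b; funext φ
        simp [Pi.add_apply, add_mul, Finset.sum_add_distrib]
      map_smul' := by
        intro r a; funext φ
        simp [Pi.smul_apply, smul_eq_mul, mul_assoc, Finset.mul_sum] }
  have hML : ∀ (c : AddChar G K → K) (φ : AddChar G K), M (L c) φ = n * c φ := by
    intro c φ
    show ∑ y : G, (∑ ψ : AddChar G K, c ψ * ψ y) * φ (-y) = n * c φ
    have h1 : ∀ y : G, (∑ ψ : AddChar G K, c ψ * ψ y) * φ (-y)
        = ∑ ψ : AddChar G K, c ψ * ((ψ * φ⁻¹) y) := by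
      intro y
      rw [Finset.sum_mul]
      refine Finset.sum_congr rfl fun ψ _ => ?_
      rw [AddChar.mul_apply, AddChar.inv_apply, mul_assoc]
    rw [Finset.sum_congr rfl fun y _ => h1 y, Finset.sum_comm]
    have h2 : ∀ ψ : AddChar G K, ∑ y : G, c ψ * ((ψ * φ⁻¹) y)
        = c ψ * (if ψ = φ then (Fintype.card G : K) else 0) := by
      intro ψ
      rw [← Finset.mul_sum]
      congr 1
      rw [AddChar.sum_eq_ite]
      congr 1
      rw [← AddChar.one_eq_zero, mul_inv_eq_one]
    rw [Finset.sum_congr rfl fun ψ _ => h2 ψ, Finset.sum_eq_single φ]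
    · rw [if_pos rfl, mul_comm]
    · intro ψ _ hψ; rw [if_neg hψ, mul_zero]
    · intro h; exact absurd (Finset.mem_univ φ) h
  have hLM : ∀ (g : G → K) (x : G), L (M g) x = (Fintype.card (AddChar G K) : K) * g x := by
    intro g x
    show ∑ ψ : AddChar G K, (∑ y : G, g y * ψ (-y)) * ψ x = _
    have h1 : ∀ ψ : AddChar G K, (∑ y : G, g y * ψ (-y)) * ψ x
        = ∑ y : G, g y * ψ (-y + x) := by
      intro ψ
      rw [Finset.sum_mul]
      refine Finset.sum_congr rfl fun y _ => ?_
      rw [AddChar.map_add_eq_mul, mul_assoc]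
    rw [Finset.sum_congr rfl fun ψ _ => h1 ψ, Finset.sum_comm]
    have h2 : ∀ y : G, ∑ ψ : AddChar G K, g y * ψ (-y + x)
        = g y * (if y = x then (Fintype.card (AddChar G K) : K) else 0) := by
      intro y
      rw [← Finset.mul_sum]
      congr 1
      by_cases hyx : y = x
      · subst hyx; rw [if_pos rfl, neg_add_cancel, sum_addChar_zero]
      · rw [if_neg hyx, sum_addChar_ne hζ]
        intro h
        apply hyx
        have := congrArg (fun z => y + z) h
        simpa using this.symm
    rw [Finset.sum_congr rfl fun y _ => h2 y, Finset.sum_eq_single x]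
    · rw [if_pos rfl, mul_comm]
    · intro y _ hy; rw [if_neg hy, mul_zero]
    · intro h; exact absurd (Finset.mem_univ x) h
  have hcard := card_addChar_eq (K := K) (G := G) hζ
  refine ⟨LinearEquiv.ofLinear L (n⁻¹ • M) ?_ ?_, fun c => rfl⟩
  · apply LinearMap.ext; intro g; funext x
    show L ((n⁻¹ • M) g) x = g x
    have : (n⁻¹ • M) g = n⁻¹ • (M g) := rfl
    rw [this, map_smul]
    show n⁻¹ * (L (M g) x) = g x
    rw [hLM, hcard, ← hn, ← mul_assoc, inv_mul_cancel₀ hnK, one_mul]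
  · apply LinearMap.ext; intro c; funext φ
    show (n⁻¹ • M) (L c) φ = c φ
    show n⁻¹ * (M (L c) φ) = c φ
    rw [hML, ← mul_assoc, inv_mul_cancel₀ hnK, one_mul]

lemma finrank_evalKer (hζ : ∃ ζ : K, IsPrimitiveRoot ζ (AddMonoid.exponent G))
    (hnK : (Fintype.card G : K) ≠ 0) (X : Set G) :
    Module.finrank K (evalKer K X) + X.ncard = Fintype.card G := by
  classical
  obtain ⟨E, hE⟩ := exists_fourier_equiv hζ hnK
  haveI : Fintype ↥X := (Set.toFinite X).fintype
  let ρ : (G → K) →ₗ[K] (↥X → K) :=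
    { toFun := fun g => fun x => g x.1
      map_add' := fun a b => rfl
      map_smul' := fun r a => rfl }
  have hker : evalKer K X = Submodule.comap (E : (AddChar G K → K) →ₗ[K] (G → K))
      (LinearMap.ker ρ) := by
    ext c
    rw [mem_evalKer, Submodule.mem_comap, LinearMap.mem_ker]
    constructor
    · intro h
      funext x
      show (E c) x.1 = 0
      rw [hE]
      exact h x.1 x.2
    · intro h x hx
      have h2 : (E c) x = 0 := congrFun h (⟨x, hx⟩ : ↥X)
      rw [hE] at h2
      exact h2
  have h1 : Module.finrank K (evalKer K X) = Module.finrank K (LinearMap.ker ρ) := by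
    rw [hker]
    exact LinearEquiv.finrank_eq (LinearEquiv.ofSubmodule' (E : _ ≃ₗ[K] _) (LinearMap.ker ρ))
  have hsurj : Function.Surjective ρ := by
    intro h
    refine ⟨fun y => if hy : y ∈ X then h ⟨y, hy⟩ else 0, ?_⟩
    funext x
    show (if hy : x.1 ∈ X then h ⟨x.1, hy⟩ else 0) = h x
    rw [dif_pos x.2]
  have hrn := LinearMap.finrank_range_add_finrank_ker ρ
  rw [LinearMap.range_eq_top.mpr hsurj, finrank_top, Module.finrank_fintype_fun_eq_card,
    Module.finrank_fintype_fun_eq_card] at hrn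
  have hX : Fintype.card ↥X = X.ncard := by
    rw [← Nat.card_eq_fintype_card, Nat.card_coe_set_eq]
  rw [h1]
  omega


end CharStuff
section Helpers

lemma exists_zsmul_inverse {G : Type} [AddCommGroup G] [Fintype G] {s : ℤ}
    (hs : IsUnit ((s : ZMod (AddMonoid.exponent G)))) :
    ∃ t : ℤ, ∀ x : G, (s * t) • x = x := by
  set m := AddMonoid.exponent G with hm
  have hm0 : m ≠ 0 := by
    have := AddMonoid.exponent_ne_zero_of_finite (G := G)
    exact this
  haveI : NeZero m := ⟨hm0⟩
  obtain ⟨u, hu⟩ := hs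
  set t : ℤ := ((((u⁻¹ : (ZMod m)ˣ) : ZMod m)).val : ℤ) with ht
  have hst : ((s * t : ℤ) : ZMod m) = 1 := by
    push_cast
    rw [ht]
    push_cast
    rw [ZMod.natCast_val, ZMod.cast_id, ← hu]
    exact u.mul_inv
  have hdvd : ((m : ℤ)) ∣ s * t - 1 := by
    rw [← ZMod.intCast_zmod_eq_zero_iff_dvd]
    push_cast at hst ⊢
    rw [hst]
    ring
  obtain ⟨c, hc⟩ := hdvd
  refine ⟨t, fun x => ?_⟩
  have h1 : s * t = 1 + c * m := by linarith [hc]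
  rw [h1, add_smul, one_smul, mul_smul]
  have h2 : (m : ℤ) • x = 0 := by
    rw [natCast_zsmul]
    exact AddMonoid.exponent_nsmul_eq_zero x
  rw [h2, smul_zero, add_zero]

lemma zsmul_injective_of_isUnit {G : Type} [AddCommGroup G] [Fintype G] {s : ℤ}
    (hs : IsUnit ((s : ZMod (AddMonoid.exponent G)))) :
    Function.Injective (fun x : G => s • x) := by
  obtain ⟨t, hts⟩ := exists_zsmul_inverse hs
  intro x y hxy
  have h := congrArg (fun z => t • z) hxy
  simp only at h
  rw [smul_smul, smul_smul, mul_comm t s, hts, hts] at h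
  exact h

lemma fixed_of_pow {F K : Type} [Field F] [Fintype F] [Field K] [Algebra F K] {N : ℕ}
    (hNcard : Fintype.card F = N) (hN2 : 2 ≤ N) {y : K} (hy : y ^ N = y) :
    ∃ c : F, algebraMap F K c = y := by
  classical
  set P : Polynomial K := Polynomial.X ^ N - Polynomial.X with hP
  have hdegX : (Polynomial.X : Polynomial K).degree < (Polynomial.X ^ N : Polynomial K).degree := by
    rw [Polynomial.degree_X_pow, Polynomial.degree_X]
    exact_mod_cast (show 1 < N from lt_of_lt_of_le one_lt_two hN2)
  have hPdeg : P.degree = (N : WithBot ℕ) := by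
    rw [hP, Polynomial.degree_sub_eq_left_of_degree_lt hdegX, Polynomial.degree_X_pow]
  have hP0 : P ≠ 0 := by
    intro h
    rw [h, Polynomial.degree_zero] at hPdeg
    simp at hPdeg
  have hroot : ∀ z : K, z ^ N = z → z ∈ P.roots.toFinset := by
    intro z hz
    rw [Multiset.mem_toFinset, Polynomial.mem_roots hP0]
    show P.IsRoot z
    rw [hP]
    simp [Polynomial.IsRoot, hz]
  have hTcard : P.roots.toFinset.card ≤ N := by
    calc P.roots.toFinset.card ≤ Multiset.card P.roots := Multiset.toFinset_card_le _
      _ ≤ P.natDegree := Polynomial.card_roots' P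
      _ = N := by
        have := Polynomial.natDegree_eq_of_degree_eq_some (by exact_mod_cast hPdeg)
        exact_mod_cast this
  set S : Finset K := Finset.univ.image (algebraMap F K) with hS
  have hScard : S.card = N := by
    rw [hS, Finset.card_image_of_injective _ (algebraMap F K).injective,
      Finset.card_univ, hNcard]
  have hsub : S ⊆ P.roots.toFinset := by
    intro z hz
    rw [hS, Finset.mem_image] at hz
    obtain ⟨c, _, rfl⟩ := hz
    apply hroot
    rw [← map_pow, ← hNcard, FiniteField.pow_card]
  have heq : S = P.roots.toFinset :=
    Finset.eq_of_subset_of_card_le hsub (by rw [hScard]; exact hTcard)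
  have hymem : y ∈ S := by rw [heq]; exact hroot y hy
  rw [hS, Finset.mem_image] at hymem
  obtain ⟨c, _, hc⟩ := hymem
  exact ⟨c, hc⟩

lemma charP_of_card_pow {F : Type} [Field F] [Fintype F] {p n : ℕ} (hp : p.Prime)
    (h : Fintype.card F = p ^ n) : CharP F p := by
  have hchar := ringChar.charP F
  obtain ⟨m, hprime, hcard⟩ := FiniteField.card F (ringChar F)
  have hdvd : ringChar F ∣ p ^ n := by
    rw [← h, hcard]
    exact dvd_pow_self _ (by positivity)
  have heq := (Nat.prime_dvd_prime_iff_eq hprime hp).mp (hprime.dvd_of_dvd_pow hdvd)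
  rw [← heq]
  exact hchar

lemma neg_one_pow_q_add_one {F : Type} [Field F] {p k q : ℕ} (hp : p.Prime) [CharP F p]
    (hpk : p ^ k = q) : (-1 : F) ^ (q + 1) = 1 := by
  rcases Nat.even_or_odd q with he | ho
  · have h2p : (2 : ℕ) ∣ p := by
      refine Nat.Prime.dvd_of_dvd_pow (p := 2) Nat.prime_two (n := k) ?_
      rw [hpk]
      exact he.two_dvd
    have hp2 : p = 2 := ((Nat.prime_dvd_prime_iff_eq Nat.prime_two hp).mp h2p).symm
    have hchar2 : (2 : F) = 0 := by
      have := CharP.cast_eq_zero F p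
      rw [hp2] at this
      exact_mod_cast this
    have hneg : (-1 : F) = 1 := by linear_combination -hchar2
    rw [hneg, one_pow]
  · exact (ho.add_one).neg_one_pow

end Helpers

section Identity

variable {G : Type} [AddCommGroup G] [Fintype G]
variable {F K : Type} [Field F] [Field K] [Algebra F K] [Fintype (AddChar G K)]
variable {p k q : ℕ}

lemma sum_eval_identity [CharP K p] (hp : p.Prime) (hpk : p ^ k = q)
    (hqbij : Function.Bijective fun z : G => q • z)
    (a b : AddChar G K → F) :
    ∑ z : G, evalF (K := K) a ((-(q : ℤ)) • z) * (evalF b z) ^ q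
      = (Fintype.card G : K) * algebraMap F K (herm q a b) := by
  classical
  haveI : ExpChar K p := ExpChar.prime hp
  have hσ : ∀ x : K, (iterateFrobenius K p k) x = x ^ q := by
    intro x; rw [iterateFrobenius_def, hpk]
  have step1 : ∀ z : G, (evalF (K := K) b z) ^ q
      = ∑ φ : AddChar G K, algebraMap F K (b φ ^ q) * φ (q • z) := by
    intro z
    rw [← hσ]
    unfold evalF
    rw [map_sum]
    refine Finset.sum_congr rfl fun φ _ => ?_
    rw [map_mul, hσ, hσ, ← map_pow, AddChar.map_nsmul_eq_pow]
  have step2 : ∀ z : G, evalF (K := K) a ((-(q : ℤ)) • z) * (evalF b z) ^ q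
      = ∑ ψ : AddChar G K, ∑ φ : AddChar G K,
          algebraMap F K (a ψ * b φ ^ q) * (ψ ((-(q : ℤ)) • z) * φ (q • z)) := by
    intro z
    rw [step1]
    unfold evalF
    rw [Finset.sum_mul_sum]
    refine Finset.sum_congr rfl fun ψ _ => Finset.sum_congr rfl fun φ _ => ?_
    rw [map_mul]
    ring
  rw [Finset.sum_congr rfl fun z _ => step2 z, Finset.sum_comm]
  have step3 : ∀ ψ : AddChar G K, ∑ z : G, ∑ φ : AddChar G K,
      algebraMap F K (a ψ * b φ ^ q) * (ψ ((-(q : ℤ)) • z) * φ (q • z))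
      = ∑ φ : AddChar G K, algebraMap F K (a ψ * b φ ^ q)
          * (if ψ = φ then (Fintype.card G : K) else 0) := by
    intro ψ
    rw [Finset.sum_comm]
    refine Finset.sum_congr rfl fun φ _ => ?_
    rw [← Finset.mul_sum]
    congr 1
    have hterm : ∀ z : G, ψ ((-(q : ℤ)) • z) * φ (q • z) = (ψ⁻¹ * φ) (q • z) := by
      intro z
      rw [AddChar.mul_apply, AddChar.inv_apply]
      congr 1
      rw [neg_smul, natCast_zsmul]
    rw [Finset.sum_congr rfl fun z _ => hterm z]
    rw [hqbij.sum_comp (fun u => (ψ⁻¹ * φ) u)]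
    rw [AddChar.sum_eq_ite]
    congr 1
    rw [← AddChar.one_eq_zero, inv_mul_eq_one]
  rw [Finset.sum_congr rfl fun ψ _ => step3 ψ]
  have step4 : ∀ ψ : AddChar G K, ∑ φ : AddChar G K, algebraMap F K (a ψ * b φ ^ q)
      * (if ψ = φ then (Fintype.card G : K) else 0)
      = algebraMap F K (a ψ * b ψ ^ q) * (Fintype.card G : K) := by
    intro ψ
    rw [Finset.sum_eq_single ψ]
    · rw [if_pos rfl]
    · intro φ _ hφ; rw [if_neg (fun h => hφ h.symm), mul_zero]
    · intro h; exact absurd (Finset.mem_univ ψ) h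
  rw [Finset.sum_congr rfl fun ψ _ => step4 ψ, ← Finset.sum_mul]
  rw [mul_comm]
  congr 1
  unfold herm
  rw [map_sum]

lemma hermExt_eq_zero_of_vanish [CharP K p] (hp : p.Prime) (hpk : p ^ k = q) (hq0 : q ≠ 0)
    (hqbij : Function.Bijective fun z : G => q • z)
    (hnF : ((Fintype.card G : F)) ≠ 0) (γ : F)
    (hγ : (Fintype.card G : F)⁻¹ + γ ^ (q + 1) = 0)
    (hneg1 : (-1 : F) ^ (q + 1) = 1)
    (a b : AddChar G K → F)
    (hvan : ∀ z : G, z ≠ 0 → evalF (K := K) a ((-(q : ℤ)) • z) = 0 ∨ evalF b z = 0) :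
    hermExt q (extWord γ a) (extWord γ b) = 0 := by
  classical
  have hid := sum_eval_identity (F := F) (K := K) hp hpk hqbij a b
  have hsingle : ∑ z : G, evalF (K := K) a ((-(q : ℤ)) • z) * (evalF b z) ^ q
      = evalF (K := K) a 0 * (evalF b 0) ^ q := by
    rw [Finset.sum_eq_single 0]
    · rw [smul_zero]
    · intro z _ hz
      rcases hvan z hz with h | h
      · rw [h, zero_mul]
      · rw [h, zero_pow hq0, mul_zero]
    · intro h; exact absurd (Finset.mem_univ 0) h
  have hev0 : ∀ c : AddChar G K → F, evalF (K := K) c 0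
      = algebraMap F K (∑ ψ : AddChar G K, c ψ) := by
    intro c
    unfold evalF
    rw [map_sum]
    refine Finset.sum_congr rfl fun ψ _ => ?_
    rw [AddChar.map_zero_eq_one, mul_one]
  set Sa : F := ∑ ψ : AddChar G K, a ψ with hSa
  set Sb : F := ∑ ψ : AddChar G K, b ψ with hSb
  have hFid : (Fintype.card G : F) * herm q a b = Sa * Sb ^ q := by
    apply (algebraMap F K).injective
    rw [map_mul, map_natCast, ← hid, hsingle, hev0, hev0, map_mul, map_pow]
  have hherm : herm q a b = (Fintype.card G : F)⁻¹ * (Sa * Sb ^ q) := by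
    rw [← hFid, ← mul_assoc, inv_mul_cancel₀ hnF, one_mul]
  have hexp : hermExt q (extWord γ a) (extWord γ b)
      = (-γ * Sa) * (-γ * Sb) ^ q + herm q a b := by
    unfold hermExt herm
    rw [Fintype.sum_option]
    rfl
  rw [hexp, hherm]
  have h1 : (-γ * Sb) ^ q = (-γ) ^ q * Sb ^ q := mul_pow _ _ _
  have h2 : -γ * (-γ) ^ q = γ ^ (q + 1) := by
    have h3 : -γ * (-γ) ^ q = (-γ) ^ (q + 1) := by
      rw [pow_succ, mul_comm]
    rw [h3, neg_pow, hneg1, one_mul]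
  calc (-γ * Sa) * ((-γ * Sb) ^ q) + (Fintype.card G : F)⁻¹ * (Sa * Sb ^ q)
      = ((Fintype.card G : F)⁻¹ + γ ^ (q + 1)) * (Sa * Sb ^ q) := by
        rw [h1, ← h2]; ring
    _ = 0 := by rw [hγ, zero_mul]
end Identity


/-- Let `G` have odd order `n` coprime to the prime power `q`, let
`(Z = {0}, X₀, X₁)` be a splitting of `G` in which `X₀, X₁` are unions of
`⟨τ_{q²}⟩`-orbits, and let `C₀ = I_{X₀}`, `C₁ = I_{X₁}` be the corresponding split group
codes over `F = F_{q²}`.  Fix `γ ∈ F` with `1/n + γ^{q+1} = 0`.  Then: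
(1) the extended codes `~C₀` and `~C₁` are (permutation-)equivalent;
(2) if `-q` splits `C₀`, then `~C₀^{⊥_H} = ~C₀` and `~C₁^{⊥_H} = ~C₁`;
(3) if `-q` stabilizes `C₀`, then `~C₀^{⊥_H} = ~C₁` and `~C₁^{⊥_H} = ~C₀`. -/
theorem stmt5
    {G : Type} [AddCommGroup G] [Fintype G]
    {F K : Type} [Field F] [Fintype F] [Field K] [Algebra F K]
    [Fintype (AddChar G K)]
    (q : ℕ) (hq : IsPrimePow q)
    (hF : Fintype.card F = q ^ 2)
    (hn : Nat.Coprime (Fintype.card G) q)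
    (hodd : Odd (Fintype.card G))
    (hK : ∃ ζ : K, IsPrimitiveRoot ζ (AddMonoid.exponent G))
    (γ : F) (hγ : (Fintype.card G : F)⁻¹ + γ ^ (q + 1) = 0)
    (X₀ X₁ : Set G)
    (hcover : ({0} : Set G) ∪ X₀ ∪ X₁ = Set.univ)
    (h0X₀ : (0 : G) ∉ X₀) (h0X₁ : (0 : G) ∉ X₁) (hX₀X₁ : Disjoint X₀ X₁)
    (hX₀orb : ∀ x ∈ X₀, ((q : ℤ) ^ 2) • x ∈ X₀)
    (hX₁orb : ∀ x ∈ X₁, ((q : ℤ) ^ 2) • x ∈ X₁)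
    (hsplit : ∃ s : ℤ, IsUnit (s : ZMod (AddMonoid.exponent G)) ∧
      tauImg s X₀ = X₁ ∧ tauImg s X₁ = X₀) :
    (∃ σ : Equiv.Perm (Option (AddChar G K)),
        (fun v => v ∘ σ) '' extCode γ (codeSet F K X₀) = extCode γ (codeSet F K X₁)) ∧
    (tauImg (-(q : ℤ)) X₀ = X₁ ∧ tauImg (-(q : ℤ)) X₁ = X₀ →
        dualExt F K q (extCode γ (codeSet F K X₀)) = extCode γ (codeSet F K X₀) ∧
        dualExt F K q (extCode γ (codeSet F K X₁)) = extCode γ (codeSet F K X₁)) ∧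
    (tauImg (-(q : ℤ)) X₀ = X₀ ∧ tauImg (-(q : ℤ)) X₁ = X₁ →
        dualExt F K q (extCode γ (codeSet F K X₀)) = extCode γ (codeSet F K X₁) ∧
        dualExt F K q (extCode γ (codeSet F K X₁)) = extCode γ (codeSet F K X₀)) := by
  classical
  obtain ⟨p, k, hpprime, hkpos, hpk⟩ := hq
  have hpp : p.Prime := Nat.prime_iff.mpr hpprime
  haveI hFp : CharP F p := charP_of_card_pow (n := 2 * k) hpp (by rw [hF, ← hpk, ← pow_mul, mul_comm k 2])
  haveI hKp : CharP K p := charP_of_injective_algebraMap (algebraMap F K).injective p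
  have hq0 : q ≠ 0 := by rw [← hpk]; exact pow_ne_zero _ hpp.pos.ne'
  have hq2 : 2 ≤ q := by
    rw [← hpk]
    exact Nat.one_lt_pow hkpos.ne' hpp.one_lt
  have hpdvdq : p ∣ q := by rw [← hpk]; exact dvd_pow_self p hkpos.ne'
  have hpn : ¬ p ∣ Fintype.card G := by
    intro h
    have hd : p ∣ Nat.gcd (Fintype.card G) q := Nat.dvd_gcd h hpdvdq
    rw [Nat.Coprime] at hn
    rw [hn] at hd
    exact hpp.ne_one (Nat.dvd_one.mp hd)
  have hnF : ((Fintype.card G : F)) ≠ 0 := by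
    rw [Ne, CharP.cast_eq_zero_iff F p]; exact hpn
  have hnK : ((Fintype.card G : K)) ≠ 0 := by
    rw [Ne, CharP.cast_eq_zero_iff K p]; exact hpn
  have hneg1 : (-1 : F) ^ (q + 1) = 1 := neg_one_pow_q_add_one hpp hpk
  haveI : NeZero (AddMonoid.exponent G) := ⟨AddMonoid.exponent_ne_zero_of_finite (G := G)⟩
  have hmdvd : AddMonoid.exponent G ∣ Fintype.card G := AddGroup.exponent_dvd_card
  have hqm : Nat.Coprime q (AddMonoid.exponent G) :=
    Nat.Coprime.coprime_dvd_right hmdvd hn.symm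
  have hqu : IsUnit (((q : ℤ) : ZMod (AddMonoid.exponent G))) := by
    have h1 : IsUnit ((q : ZMod (AddMonoid.exponent G))) :=
      (ZMod.isUnit_iff_coprime q _).mpr hqm
    have h2 : (((q : ℤ) : ZMod (AddMonoid.exponent G))) = ((q : ZMod (AddMonoid.exponent G))) := by
      push_cast; rfl
    rw [h2]; exact h1
  have hq2u : IsUnit ((((q : ℤ) ^ 2 : ℤ) : ZMod (AddMonoid.exponent G))) := by
    have h2 : ((((q : ℤ) ^ 2 : ℤ) : ZMod (AddMonoid.exponent G)))
        = (((q : ℤ) : ZMod (AddMonoid.exponent G))) ^ 2 := by push_cast; ring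
    rw [h2]; exact hqu.pow 2
  have hinj2 : Function.Injective (fun x : G => ((q : ℤ) ^ 2) • x) :=
    zsmul_injective_of_isUnit hq2u
  have hqbij : Function.Bijective (fun z : G => q • z) := by
    rw [← Finite.injective_iff_bijective]
    intro x y hxy
    apply zsmul_injective_of_isUnit hqu
    show (q : ℤ) • x = (q : ℤ) • y
    rw [natCast_zsmul, natCast_zsmul]; exact hxy
  have hcov : ∀ z : G, z ≠ 0 → z ∈ X₀ ∨ z ∈ X₁ := by
    intro z hz
    have hmem : z ∈ (({0} : Set G) ∪ X₀) ∪ X₁ := by rw [hcover]; trivial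
    rcases hmem with h | h
    · rcases h with h | h
      · exact absurd h (by simpa using hz)
      · exact Or.inl h
    · exact Or.inr h
  have hfin : ∀ X : Set G, X.Finite := fun X => Set.toFinite X
  have hcards : 1 + X₀.ncard + X₁.ncard = Fintype.card G := by
    have h1 : (({0} : Set G) ∪ X₀ ∪ X₁).ncard = Fintype.card G := by
      rw [hcover, Set.ncard_univ, Nat.card_eq_fintype_card]
    have hd1 : Disjoint ({0} : Set G) X₀ := Set.disjoint_singleton_left.mpr h0X₀
    have hd2 : Disjoint (({0} : Set G) ∪ X₀) X₁ := by
      rw [Set.disjoint_union_left]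
      exact ⟨Set.disjoint_singleton_left.mpr h0X₁, hX₀X₁⟩
    rw [Set.ncard_union_eq hd2 ((hfin _).union (hfin _)) (hfin _),
      Set.ncard_union_eq hd1 (hfin _) (hfin _), Set.ncard_singleton] at h1
    exact h1
  have hx01 : X₀.ncard = X₁.ncard := by
    obtain ⟨s, hsu, hs0, hs1⟩ := hsplit
    have h1 := Set.ncard_image_of_injective X₀ (zsmul_injective_of_isUnit hsu)
    have h2 : (fun x : G => s • x) '' X₀ = X₁ := hs0
    rw [h2] at h1
    exact h1.symm
  haveI : ExpChar F p := ExpChar.prime hpp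
  haveI : ExpChar K p := ExpChar.prime hpp
  set σF : F →+* F := iterateFrobenius F p k with hσFdef
  have hσF : ∀ x : F, σF x = x ^ q := fun x => by
    rw [hσFdef, iterateFrobenius_def, hpk]
  set σK2 : K →+* K := iterateFrobenius K p (2 * k) with hσK2def
  have hσK2 : ∀ x : K, σK2 x = x ^ (q ^ 2) := fun x => by
    rw [hσK2def, iterateFrobenius_def]
    congr 1
    rw [← hpk, ← pow_mul, mul_comm k 2]
  have hσalg : ∀ c : F, σK2 (algebraMap F K c) = algebraMap F K c := by
    intro c
    rw [hσK2, ← map_pow]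
    congr 1
    calc c ^ q ^ 2 = c ^ Fintype.card F := by rw [hF]
      _ = c := FiniteField.pow_card c
  have hσfix : ∀ y : K, σK2 y = y → ∃ c : F, algebraMap F K c = y := by
    intro y hy
    rw [hσK2] at hy
    exact fixed_of_pow hF (by nlinarith) hy
  have hstab : ∀ X : Set G, (∀ x ∈ X, ((q : ℤ) ^ 2) • x ∈ X) →
      ∀ v ∈ evalKer K X, (fun ψ : AddChar G K => σK2 (v ψ)) ∈ evalKer K X := by
    intro X hX v hv x hx
    have himg : (fun y : G => ((q : ℤ) ^ 2) • y) '' X = X := by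
      apply Set.eq_of_subset_of_ncard_le
      · rintro _ ⟨y, hy, rfl⟩; exact hX y hy
      · rw [Set.ncard_image_of_injective _ hinj2]
      · exact hfin X
    obtain ⟨y, hy, hyx⟩ : ∃ y ∈ X, ((q : ℤ) ^ 2) • y = x := by
      rw [← himg] at hx
      obtain ⟨y, hy, h⟩ := hx
      exact ⟨y, hy, h⟩
    show ∑ ψ : AddChar G K, σK2 (v ψ) * ψ x = 0
    have hterm : ∀ ψ : AddChar G K, σK2 (v ψ) * ψ x = σK2 (v ψ * ψ y) := by
      intro ψ
      rw [map_mul]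
      congr 1
      rw [hσK2, ← AddChar.map_nsmul_eq_pow]
      congr 1
      rw [← hyx, show ((q : ℤ) ^ 2) = ((q ^ 2 : ℕ) : ℤ) by push_cast; ring, natCast_zsmul]
    rw [Finset.sum_congr rfl fun ψ _ => hterm ψ, ← map_sum, hv y hy, map_zero]
  have hcode : ∀ X : Set G, codeSet F K X
      = ((ptsF F (evalKer K X) : Submodule F (AddChar G K → F)) : Set (AddChar G K → F)) := by
    intro X
    ext a
    exact Iff.rfl
  let extL : (AddChar G K → F) →ₗ[F] (Option (AddChar G K) → F) :=
    { toFun := extWord γ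
      map_add' := by
        intro a b
        funext o
        cases o with
        | none =>
          show -γ * ∑ ψ : AddChar G K, (a ψ + b ψ)
            = (-γ * ∑ ψ : AddChar G K, a ψ) + (-γ * ∑ ψ : AddChar G K, b ψ)
          rw [Finset.sum_add_distrib]
          ring
        | some ψ => rfl
      map_smul' := by
        intro c a
        funext o
        cases o with
        | none =>
          show -γ * ∑ ψ : AddChar G K, c * a ψ = c * (-γ * ∑ ψ : AddChar G K, a ψ)
          rw [← Finset.mul_sum]
          ring
        | some ψ => rfl }
  have hextinj : Function.Injective extL := by
    intro a b h
    funext ψ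
    exact congrFun h (some ψ)
  have hextset : ∀ X : Set G, extCode γ (codeSet F K X)
      = ((Submodule.map extL (ptsF F (evalKer K X)) : Submodule F _) : Set _) := by
    intro X
    rw [Submodule.map_coe, ← hcode]
    rfl
  have hcardChar := card_addChar_eq (K := K) (G := G) hK
  have hdimcode : ∀ X : Set G, (∀ x ∈ X, ((q : ℤ) ^ 2) • x ∈ X) →
      Module.finrank F (ptsF F (evalKer K X)) + X.ncard = Fintype.card G := by
    intro X hX
    rw [finrank_ptsF σK2 hσalg hσfix (evalKer K X) (hstab X hX)]
    exact finrank_evalKer hK hnK X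
  have hconv : ∀ v w : Option (AddChar G K) → F,
      hermExt q v w = ∑ o : Option (AddChar G K), v o * σF (w o) := by
    intro v w
    unfold hermExt
    exact Finset.sum_congr rfl fun o _ => by rw [hσF]
  have dual_eq : ∀ X Y : Set G, (∀ x ∈ X, ((q : ℤ) ^ 2) • x ∈ X) →
      (∀ x ∈ Y, ((q : ℤ) ^ 2) • x ∈ Y) →
      1 + X.ncard + Y.ncard = Fintype.card G →
      (∀ z : G, z ≠ 0 → ((-(q : ℤ)) • z ∈ Y ∨ z ∈ X)) →
      dualExt F K q (extCode γ (codeSet F K X)) = extCode γ (codeSet F K Y) := by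
    intro X Y hX hY hcardXY hcond
    set W : Submodule F (Option (AddChar G K) → F) :=
      Submodule.map extL (ptsF F (evalKer K X)) with hW
    set W' : Submodule F (Option (AddChar G K) → F) :=
      Submodule.map extL (ptsF F (evalKer K Y)) with hW'
    have hdset : dualExt F K q (extCode γ (codeSet F K X))
        = ((sigmaDual σF W : Submodule F _) : Set _) := by
      rw [hextset X]
      ext v
      constructor
      · intro hv
        show v ∈ sigmaDual σF W
        rw [mem_sigmaDual]
        intro w hw
        rw [← hconv]
        exact hv w hw
      · intro hv w hw
        rw [hconv]
        exact hv w hw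
    have hle : W' ≤ sigmaDual σF W := by
      intro v hv
      rw [hW', Submodule.mem_map] at hv
      obtain ⟨a, ha, rfl⟩ := hv
      rw [mem_sigmaDual]
      intro w hw
      rw [hW, Submodule.mem_map] at hw
      obtain ⟨b, hb, rfl⟩ := hw
      show ∑ o : Option (AddChar G K), extWord γ a o * σF (extWord γ b o) = 0
      rw [← hconv]
      apply hermExt_eq_zero_of_vanish hpp hpk hq0 hqbij hnF γ hγ hneg1
      intro z hz
      rcases hcond z hz with h | h
      · left
        exact ha _ h
      · right
        exact hb _ h
    have hfr1 : Module.finrank F W = Module.finrank F (ptsF F (evalKer K X)) :=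
      (LinearEquiv.finrank_eq
        (Submodule.equivMapOfInjective extL hextinj (ptsF F (evalKer K X)))).symm
    have hfr2 : Module.finrank F W' = Module.finrank F (ptsF F (evalKer K Y)) :=
      (LinearEquiv.finrank_eq
        (Submodule.equivMapOfInjective extL hextinj (ptsF F (evalKer K Y)))).symm
    have hfrD := finrank_sigmaDual σF W
    rw [Fintype.card_option, hcardChar] at hfrD
    have hdX := hdimcode X hX
    have hdY := hdimcode Y hY
    have heqsub : W' = sigmaDual σF W := by
      apply Submodule.eq_of_le_of_finrank_le hle
      omega
    rw [hdset, ← heqsub, hextset Y]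
  refine ⟨?_, ?_, ?_⟩
  · -- Part (1): equivalence of the extended codes
    obtain ⟨s, hsu, hs0, hs1⟩ := hsplit
    obtain ⟨t, hst⟩ := exists_zsmul_inverse hsu
    have hts : ∀ x : G, (t * s) • x = x := fun x => by rw [mul_comm]; exact hst x
    have hstx : ∀ x : G, s • t • x = x := fun x => by rw [smul_smul]; exact hst x
    have htsx : ∀ x : G, t • s • x = x := fun x => by rw [smul_smul]; exact hts x
    let τs : G →+ G := AddMonoidHom.mk' (fun x => s • x) (fun a b => smul_add s a b)
    let τt : G →+ G := AddMonoidHom.mk' (fun x => t • x) (fun a b => smul_add t a b)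
    let π : AddChar G K ≃ AddChar G K :=
      { toFun := fun ψ => ψ.compAddMonoidHom τs
        invFun := fun ψ => ψ.compAddMonoidHom τt
        left_inv := by
          intro ψ
          ext x
          show ψ (s • (t • x)) = ψ x
          rw [hstx]
        right_inv := by
          intro ψ
          ext x
          show ψ (t • (s • x)) = ψ x
          rw [htsx] }
    have hπ : ∀ (ψ : AddChar G K) (x : G), (π ψ) x = ψ (s • x) := fun ψ x => rfl
    have hπs : ∀ (ψ : AddChar G K) (x : G), (π.symm ψ) x = ψ (t • x) := fun ψ x => rfl
    have hπsum : ∀ a : AddChar G K → F,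
        ∑ ψ : AddChar G K, a (π ψ) = ∑ ψ : AddChar G K, a ψ := fun a => Equiv.sum_comp π a
    have hev1 : ∀ (a : AddChar G K → F) (x : G),
        evalF (K := K) (fun ψ => a (π ψ)) x = evalF a (t • x) := by
      intro a x
      unfold evalF
      refine Fintype.sum_equiv π _ _ fun ψ => ?_
      congr 1
      rw [hπ, hstx]
    have hev2 : ∀ (b : AddChar G K → F) (x : G),
        evalF (K := K) (fun ψ => b (π.symm ψ)) x = evalF b (s • x) := by
      intro b x
      unfold evalF
      refine Fintype.sum_equiv π.symm _ _ fun ψ => ?_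
      congr 1
      rw [hπs, htsx]
    refine ⟨Equiv.optionCongr π, ?_⟩
    have hcomp : ∀ a : AddChar G K → F,
        (extWord γ a) ∘ (Equiv.optionCongr π) = extWord (K := K) γ (fun ψ => a (π ψ)) := by
      intro a
      funext o
      cases o with
      | none =>
        show extWord γ a ((Equiv.optionCongr π) none) = -γ * ∑ ψ : AddChar G K, a (π ψ)
        rw [hπsum]
        rfl
      | some ψ => rfl
    ext w
    constructor
    · rintro ⟨v, hv, rfl⟩
      obtain ⟨a, ha, rfl⟩ := hv
      refine ⟨fun ψ => a (π ψ), ?_, (hcomp a).symm⟩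
      intro x hx
      rw [hev1]
      apply ha
      have hmem : x ∈ tauImg s X₀ := hs0 ▸ hx
      obtain ⟨y, hy, rfl⟩ := hmem
      show t • s • y ∈ X₀
      rw [htsx]
      exact hy
    · rintro ⟨b, hb, rfl⟩
      refine ⟨extWord γ (fun ψ => b (π.symm ψ)), ⟨fun ψ => b (π.symm ψ), ?_, rfl⟩, ?_⟩
      · intro x hx
        rw [hev2]
        apply hb
        rw [← hs0]
        exact ⟨x, hx, rfl⟩
      · show (extWord γ fun ψ => b (π.symm ψ)) ∘ ⇑(Equiv.optionCongr π) = extWord γ b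
        rw [hcomp]
        have hbb : (fun ψ => b (π.symm (π ψ))) = b := by
          funext ψ
          rw [π.symm_apply_apply]
        rw [hbb]
  · -- Part (2): -q splits C₀
    rintro ⟨h0, h1⟩
    constructor
    · apply dual_eq X₀ X₀ hX₀orb hX₀orb (by omega)
      intro z hz
      rcases hcov z hz with h | h
      · exact Or.inr h
      · refine Or.inl ?_
        rw [← h1]
        exact ⟨z, h, rfl⟩
    · apply dual_eq X₁ X₁ hX₁orb hX₁orb (by omega)
      intro z hz
      rcases hcov z hz with h | h
      · refine Or.inl ?_
        rw [← h0]
        exact ⟨z, h, rfl⟩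
      · exact Or.inr h
  · -- Part (3): -q stabilizes C₀
    rintro ⟨h0, h1⟩
    constructor
    · apply dual_eq X₀ X₁ hX₀orb hX₁orb (by omega)
      intro z hz
      rcases hcov z hz with h | h
      · exact Or.inr h
      · refine Or.inl ?_
        rw [← h1]
        exact ⟨z, h, rfl⟩
    · apply dual_eq X₁ X₀ hX₁orb hX₀orb (by omega)
      intro z hz
      rcases hcov z hz with h | h
      · refine Or.inl ?_
        rw [← h0]
        exact ⟨z, h, rfl⟩
      · exact Or.inr h
end
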